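/- arXiv:1012.0957 — 6 statements merged into one kernel-verified Lean document; each statement's English description precedes it below -/
import Mathlib

section
/- Let M be a vector space over ℂ, let q ∈ ℂ[s,s⁻¹], and let D be the derivation of ℂ[s,s⁻¹] given by D(u) = q·(du/ds). Let S(x) = Σ_i S_{(i)} x^i ∈ (End_ℂ M)((x)) be such that: (i) S(x) is invertible in the ring (End_ℂ M)((x)); (ii) S_{(i)}S_{(j)} = S_{(j)}S_{(i)} for all integers i, j; and (iii) dS(x)/dx = q(S(x)), where q(S(x)) denotes the evaluation of the Laurent polynomial q at the unit S(x). Then there is a unique ℂ-algebra homomorphism Y : ℂ[s,s⁻¹] → (End_ℂ M)((x)) with Y(s) = S(x); it is given by Y(u) = u(S(x)), and it satisfies Y(D u) = d/dx (Y(u)) for every u ∈ ℂ[s,s⁻¹]. -/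
/-!
An algebra map out of `ℂ[s,s⁻¹]` is determined by the unit it sends `s` to, so `Y` must be
`u ↦ u(S)`. The derivative `d/dx` satisfies the Leibniz rule on `(End M)((x))`, hence
`d/dx (Sⁿ) = n Sⁿ⁻¹ S'` for all `n ∈ ℤ` as soon as `S'` commutes with `S`; here `S' = q(S)` is a
Laurent polynomial in `S`, so it does. Summing over the monomials of `u` gives
`d/dx (u(S)) = u'(S) q(S) = (q u')(S)`.
-/

/-- Formal derivative of a Laurent series. -/
noncomputable def lsDeriv {A : Type*} [Ring A] (f : LaurentSeries A) : LaurentSeries A where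
  coeff k := (k + 1) • f.coeff (k + 1)
  isPWO_support' := by
    refine (f.isPWO_support.image_of_monotone
      (f := fun m : ℤ => m - 1) (fun a b h => by simpa using h)).mono ?_
    intro k hk
    have hk' : f.coeff (k + 1) ≠ 0 := by
      intro h
      simp [Function.mem_support, h] at hk
    exact ⟨k + 1, hk', by ring⟩

/-- The formal derivative `du/ds` of a Laurent polynomial `u = ∑ cₙ sⁿ`. -/
noncomputable def lpDeriv (u : LaurentPolynomial ℂ) : LaurentPolynomial ℂ :=
  Finsupp.sum u.coeff fun n c => ((n : ℂ) * c) • LaurentPolynomial.T (n - 1)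

/-- Evaluation of a Laurent polynomial `u = ∑ cₙ sⁿ ∈ ℂ[s,s⁻¹]` at a unit `U` of a
ℂ-algebra `A`, namely `u(U) = ∑ cₙ • Uⁿ` (with `Uⁿ` the integer power in `Aˣ`). -/
noncomputable def evalLP {A : Type*} [Ring A] [Algebra ℂ A]
    (u : LaurentPolynomial ℂ) (U : Aˣ) : A :=
  Finsupp.sum u.coeff fun n c => c • (((U ^ n : Aˣ) : A))

open LaurentPolynomial HahnSeries

section Derivative
variable {A : Type*} [Ring A]

theorem lsDeriv_eq_derivative (R : Type*) [Semiring R] [Module R A] (f : LaurentSeries A) :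
    lsDeriv f = LaurentSeries.derivative R f := by
  ext n
  simp [lsDeriv]

theorem commute_single_one (b : ℤ) (f : LaurentSeries A) : Commute (single b (1 : A)) f := by
  ext a
  rw [coeff_single_mul, coeff_mul_single, one_mul, mul_one]

theorem coeff_single_one_mul_lsDeriv (f : LaurentSeries A) (a : ℤ) :
    (single 1 (1 : A) * lsDeriv f).coeff a = a • f.coeff a := by
  rw [coeff_single_mul, one_mul]
  change (a - 1 + 1) • f.coeff (a - 1 + 1) = _
  rw [sub_add_cancel]

theorem lsDeriv_mul (f g : LaurentSeries A) :
    lsDeriv (f * g) = lsDeriv f * g + f * lsDeriv g := by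
  have hsupp : ∀ h : LaurentSeries A, (single 1 (1 : A) * lsDeriv h).support ⊆ h.support := by
    intro h n hn
    rw [mem_support, coeff_single_one_mul_lsDeriv] at hn
    exact mem_support _ _ |>.mpr fun h0 => hn (by rw [h0, smul_zero])
  -- `x · d/dx` scales the `n`-th coefficient by `n` and so preserves supports: the Leibniz rule
  -- for it is checked on a single antidiagonal, and `x` is a central unit.
  have euler : single 1 (1 : A) * lsDeriv (f * g) =
      single 1 1 * lsDeriv f * g + f * (single 1 1 * lsDeriv g) := by
    ext a
    rw [coeff_add, coeff_single_one_mul_lsDeriv, coeff_mul,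
      coeff_mul_left' f.isPWO_support (hsupp f), coeff_mul_right' g.isPWO_support (hsupp g),
      Finset.smul_sum, ← Finset.sum_add_distrib]
    refine Finset.sum_congr rfl fun ij hij => ?_
    rw [Finset.mem_antidiagonal] at hij
    rw [coeff_single_one_mul_lsDeriv, coeff_single_one_mul_lsDeriv, smul_mul_assoc,
      mul_smul_comm, ← add_smul, ← hij.2.2]
  have hinv : single (-1) (1 : A) * single 1 1 = 1 := by
    rw [single_mul_single, neg_add_cancel, mul_one, single_zero_one]
  calc lsDeriv (f * g) = single (-1) 1 * (single 1 1 * lsDeriv (f * g)) := by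
        rw [← mul_assoc, hinv, one_mul]
    _ = single (-1) 1 * (single 1 1 * (lsDeriv f * g + f * lsDeriv g)) := by
        rw [euler, mul_assoc, ← mul_assoc f, ← (commute_single_one 1 f).eq, mul_assoc, ← mul_add]
    _ = lsDeriv f * g + f * lsDeriv g := by rw [← mul_assoc, hinv, one_mul]

end Derivative

theorem apply_units_zpow_of_leibniz {A : Type*} [Ring A] {D : A → A}
    (hD : ∀ a b, D (a * b) = D a * b + a * D b) (U : Aˣ) (hU : Commute (D U) U) (n : ℤ) :
    D ↑(U ^ n) = n • (↑(U ^ (n - 1)) * D U) := by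
  set defect : ℤ → A := fun n => D ↑(U ^ n) - n • (↑(U ^ (n - 1)) * D U) with hdefect
  suffices ∀ n, defect n = 0 from sub_eq_zero.mp (this n)
  have hD1 : D 1 = 0 := by simpa using hD 1 1
  have hstep : ∀ n, defect (n + 1) = defect n * U := by
    intro n
    have hpow : (↑(U ^ (n - 1)) : A) * U = ↑(U ^ n) := by
      rw [← Units.val_mul, ← zpow_add_one, sub_add_cancel]
    have hshift : (↑(U ^ (n - 1)) : A) * D U * U = ↑(U ^ n) * D U := by
      rw [mul_assoc, hU.eq, ← mul_assoc, hpow]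
    simp only [hdefect, zpow_add_one, Units.val_mul, hD, add_sub_cancel_right, sub_mul,
      smul_mul_assoc, hshift, add_smul, one_smul]
    abel
  intro n
  induction n using Int.induction_on with
  | zero => simp [hdefect, hD1]
  | succ i ih => rw [hstep, ih, zero_mul]
  | pred i ih =>
    have h := hstep (-i - 1)
    rw [sub_add_cancel, ih, eq_comm, Units.mul_left_eq_zero] at h
    exact h

section Evaluation
variable {A : Type*} [Ring A] [Algebra ℂ A]

noncomputable def evalLPAlgHom (U : Aˣ) : LaurentPolynomial ℂ →ₐ[ℂ] A :=
  AddMonoidAlgebra.lift ℂ A ℤ ((Units.coeHom A).comp (zpowersHom Aˣ U))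

theorem evalLPAlgHom_apply (U : Aˣ) (u : LaurentPolynomial ℂ) :
    evalLPAlgHom U u = evalLP u U := by
  rw [evalLPAlgHom, AddMonoidAlgebra.lift_apply]
  rfl

theorem evalLPAlgHom_T (U : Aˣ) (n : ℤ) : evalLPAlgHom U (T n) = ↑(U ^ n) := by
  rw [evalLPAlgHom, T, AddMonoidAlgebra.lift_single, one_smul]
  rfl

theorem eq_evalLPAlgHom_of_apply_T_one {Y : LaurentPolynomial ℂ →ₐ[ℂ] A} {U : Aˣ}
    (hY : Y (T 1) = U) : Y = evalLPAlgHom U := by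
  refine (AddMonoidAlgebra.lift ℂ A ℤ).symm.injective (MonoidHom.ext_mint ?_)
  simpa [evalLPAlgHom, zpowersHom_apply] using hY

theorem apply_evalLPAlgHom_of_leibniz {D : A →ₗ[ℂ] A}
    (hD : ∀ a b, D (a * b) = D a * b + a * D b) (U : Aˣ) (hU : Commute (D U) U)
    (u : LaurentPolynomial ℂ) :
    D (evalLPAlgHom U u) = evalLPAlgHom U (lpDeriv u) * D U := by
  rw [evalLPAlgHom_apply, evalLP, map_finsuppSum, lpDeriv, map_finsuppSum, Finsupp.sum_mul]
  refine Finsupp.sum_congr fun n _ => ?_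
  rw [map_smul, apply_units_zpow_of_leibniz hD U hU, map_smul, evalLPAlgHom_T, smul_mul_assoc,
    mul_smul, Int.cast_smul_eq_zsmul, smul_comm]

theorem evalLPAlgHom_mul_lpDeriv {D : A →ₗ[ℂ] A} (hD : ∀ a b, D (a * b) = D a * b + a * D b)
    {U : Aˣ} {q : LaurentPolynomial ℂ} (hq : D U = evalLPAlgHom U q) (u : LaurentPolynomial ℂ) :
    evalLPAlgHom U (q * lpDeriv u) = D (evalLPAlgHom U u) := by
  have hU : Commute (D U) U := by
    have hT : (U : A) = evalLPAlgHom U (T 1) := by rw [evalLPAlgHom_T, zpow_one]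
    rw [hq, hT]
    exact (Commute.all q (T 1)).map (evalLPAlgHom U)
  rw [apply_evalLPAlgHom_of_leibniz hD U hU, hq, ← map_mul, mul_comm]

end Evaluation

theorem stmt_2_general (M : Type*) [AddCommGroup M] [Module ℂ M] (q : LaurentPolynomial ℂ)
    (S : LaurentSeries (Module.End ℂ M)) (hU : IsUnit S)
    (hode : lsDeriv S = evalLP q hU.unit) :
    (∃! Y : LaurentPolynomial ℂ →ₐ[ℂ] LaurentSeries (Module.End ℂ M),
        Y (LaurentPolynomial.T 1) = S) ∧
    (∀ Y : LaurentPolynomial ℂ →ₐ[ℂ] LaurentSeries (Module.End ℂ M),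
      Y (LaurentPolynomial.T 1) = S →
        (∀ u : LaurentPolynomial ℂ, Y u = evalLP u hU.unit) ∧
        (∀ u : LaurentPolynomial ℂ, Y (q * lpDeriv u) = lsDeriv (Y u))) := by
  have hY : ∀ Y : LaurentPolynomial ℂ →ₐ[ℂ] LaurentSeries (Module.End ℂ M),
      Y (T 1) = S → Y = evalLPAlgHom hU.unit :=
    fun Y h => eq_evalLPAlgHom_of_apply_T_one (h.trans hU.unit_spec.symm)
  have hT : evalLPAlgHom hU.unit (T 1) = S := by rw [evalLPAlgHom_T, zpow_one, hU.unit_spec]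
  refine ⟨⟨_, hT, hY⟩, fun Y h => ?_⟩
  obtain rfl := hY Y h
  have hq : LaurentSeries.derivative ℂ ↑hU.unit = evalLPAlgHom hU.unit q := by
    rw [hU.unit_spec, ← lsDeriv_eq_derivative, hode, evalLPAlgHom_apply]
  refine ⟨evalLPAlgHom_apply _, fun u => ?_⟩
  rw [lsDeriv_eq_derivative ℂ]
  exact evalLPAlgHom_mul_lpDeriv
    (fun f g => by simp only [← lsDeriv_eq_derivative, lsDeriv_mul]) hq u

/-- Let `M` be a ℂ-vector space, `q ∈ ℂ[s,s⁻¹]`, and `D` the derivation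
`u ↦ q·(du/ds)` of `ℂ[s,s⁻¹]`.  If `S(x) ∈ (End_ℂ M)((x))` is invertible, has pairwise
commuting coefficients, and satisfies `dS/dx = q(S)`, then there is a unique ℂ-algebra
homomorphism `Y : ℂ[s,s⁻¹] → (End_ℂ M)((x))` with `Y s = S`; it is given by
`Y u = u(S)` and satisfies `Y (D u) = d/dx (Y u)` for all `u`. -/
theorem stmt_2 (M : Type*) [AddCommGroup M] [Module ℂ M] (q : LaurentPolynomial ℂ)
    (S : LaurentSeries (Module.End ℂ M)) (hU : IsUnit S)
    (hcomm : ∀ i j : ℤ, Commute (S.coeff i) (S.coeff j))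
    (hode : lsDeriv S = evalLP q hU.unit) :
    (∃! Y : LaurentPolynomial ℂ →ₐ[ℂ] LaurentSeries (Module.End ℂ M),
        Y (LaurentPolynomial.T 1) = S) ∧
    (∀ Y : LaurentPolynomial ℂ →ₐ[ℂ] LaurentSeries (Module.End ℂ M),
      Y (LaurentPolynomial.T 1) = S →
        (∀ u : LaurentPolynomial ℂ, Y u = evalLP u hU.unit) ∧
        (∀ u : LaurentPolynomial ℂ, Y (q * lpDeriv u) = lsDeriv (Y u))) :=
  stmt_2_general M q S hU hode
end

section
/- Let n ≥ 1, let p ∈ ℂ[s] be a nonzero polynomial and N_q ∈ ℕ such that p and s^{N_q} are coprime (i.e. N_q = 0 or p(0) ≠ 0). Let S ∈ Mₙ(ℂ)((x)) be invertible in Mₙ(ℂ)((x)), with pairwise commuting coefficients, satisfying S^{N_q}·(dS/dx) = p(S). Assume there exists f ∈ ℂ((x)) of order 0 (i.e. f has nonzero constant coefficient and no negative-degree terms) such that every coefficient of S − f·1ₙ is a nilpotent matrix. Then both S and S⁻¹ lie in Mₙ(ℂ)[[x]] (they have no negative-degree coefficients); consequently u(S) ∈ Mₙ(ℂ)[[x]]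 for every Laurent polynomial u ∈ ℂ[s,s⁻¹]. -/
/-!
Work in the commutative finite-dimensional algebra `K` generated by the coefficients of `S`: its
nilradical `I` is nilpotent and contains the negative coefficients of `S` and `S₀ - f(0)`.
Suppose the negative coefficients lie in `I ^ d`. Modulo `I ^ (d + 1)` write `S = G + E` with `G`
a power series and `E` its polar part; then `E² = 0`, so the equation linearises to
`G ^ N * E' = p(G) + p'(G) E - G ^ N G' - N G ^ (N - 1) G' E`. If `E ≠ 0` has order `m < 0`,
the coefficient of `x ^ (m - 1)` reads `f(0) ^ N * m * E_m = 0`, which is absurd. Hence the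
polar part vanishes modulo every power of `I`, i.e. `S` is a power series. Its constant term is
`f(0)` plus a nilpotent, hence a unit, so `S⁻¹` is a power series too.
-/

open Polynomial

-- With coefficients in a commutative ring, `LaurentSeries B` also carries the `Algebra` instance
-- `HahnSeries.powerSeriesAlgebra`, which is not definitionally equal to this one.
attribute [local instance 2000] HahnSeries.instAlgebra

namespace HahnSeries

theorem zero_le_orderTop_iff_forall {Γ R : Type*} [Zero Γ] [LinearOrder Γ] [Zero R]
    {x : HahnSeries Γ R} : 0 ≤ x.orderTop ↔ ∀ g < 0, x.coeff g = 0 := by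
  simpa using le_orderTop_iff_forall (x := x) (i := ((0 : Γ) : WithTop Γ))

variable {Γ R : Type*} [AddCommMonoid Γ] [LinearOrder Γ] [IsOrderedCancelAddMonoid Γ]

theorem coeff_mul_of_le_orderTop [NonUnitalNonAssocSemiring R] {x y : HahnSeries Γ R} {a b : Γ}
    (hx : a ≤ x.orderTop) (hy : b ≤ y.orderTop) :
    (x * y).coeff (a + b) = x.coeff a * y.coeff b := by
  classical
  rw [coeff_mul]
  refine Finset.sum_eq_single (a, b) (fun ij hij hne => ?_) (fun hab => ?_)
  · obtain ⟨hi, hj, hsum⟩ := Finset.mem_antidiagonal.mp hij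
    have hai : a ≤ ij.1 :=
      not_lt.mp fun h => hi (le_orderTop_iff_forall.mp hx _ (by exact_mod_cast h))
    have hbj : b ≤ ij.2 :=
      not_lt.mp fun h => hj (le_orderTop_iff_forall.mp hy _ (by exact_mod_cast h))
    refine absurd (Prod.ext ?_ ?_) hne
    · exact (hai.eq_or_lt.resolve_right fun h => (add_lt_add_of_lt_of_le h hbj).ne' hsum).symm
    · exact (hbj.eq_or_lt.resolve_right fun h => (add_lt_add_of_le_of_lt hai h).ne' hsum).symm
  · by_contra hne
    exact hab (Finset.mem_antidiagonal.mpr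
      ⟨left_ne_zero_of_mul hne, right_ne_zero_of_mul hne, rfl⟩)

theorem mul_eq_zero_of_coeff_mul_coeff [NonUnitalNonAssocSemiring R] {x y : HahnSeries Γ R}
    (h : ∀ i j, x.coeff i * y.coeff j = 0) : x * y = 0 := by
  ext k
  simp [coeff_mul, h]

theorem coeff_pow_zero_of_zero_le_orderTop [Semiring R] {x : HahnSeries Γ R} (hx : 0 ≤ x.orderTop)
    (n : ℕ) : (x ^ n).coeff 0 = x.coeff 0 ^ n := by
  induction n with
  | zero => simp
  | succ n ih =>
    have hpow : 0 ≤ (x ^ n).orderTop :=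
      (nsmul_nonneg hx n).trans orderTop_nsmul_le_orderTop_pow
    rw [pow_succ, pow_succ, ← ih, ← coeff_mul_of_le_orderTop hpow hx, add_zero]

theorem zero_le_orderTop_of_mul [Ring R] {x y : HahnSeries Γ R} (hx : 0 ≤ x.orderTop)
    (hx0 : IsUnit (x.coeff 0)) (hxy : 0 ≤ (x * y).orderTop) : 0 ≤ y.orderTop := by
  by_contra! hy
  obtain ⟨g, hg⟩ := WithTop.ne_top_iff_exists.mp hy.ne_top
  have hcoeff := coeff_mul_of_le_orderTop hx hg.le
  rw [zero_add, coeff_eq_zero_of_lt_orderTop (hxy.trans_lt' (hg ▸ hy)), eq_comm,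
    hx0.mul_right_eq_zero] at hcoeff
  exact coeff_orderTop_ne hg.symm hcoeff

variable (Γ) in
def nonnegSubalgebra (R A : Type*) [CommSemiring R] [Semiring A] [Algebra R A] :
    Subalgebra R (HahnSeries Γ A) where
  carrier := {x | 0 ≤ x.orderTop}
  add_mem' {x y} hx hy := (le_min hx hy).trans (min_orderTop_le_orderTop_add (x := x) (y := y))
  mul_mem' {x y} hx hy := by
    simpa using (add_le_add hx hy).trans (orderTop_add_le_mul (x := x) (y := y))
  algebraMap_mem' r := by
    simpa [algebraMap_apply, C_apply] using orderTop_single_le (a := (0 : Γ))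

theorem mem_nonnegSubalgebra {R A : Type*} [CommSemiring R] [Semiring A] [Algebra R A]
    {x : HahnSeries Γ A} : x ∈ nonnegSubalgebra Γ R A ↔ 0 ≤ x.orderTop := by
  rfl

section map

variable {A B : Type*} [CommSemiring R] [Semiring A] [Algebra R A] [Semiring B] [Algebra R B]

def mapAlgHom (φ : A →ₐ[R] B) : HahnSeries Γ A →ₐ[R] HahnSeries Γ B where
  toFun x := x.map φ
  map_zero' := by ext; simp
  map_add' x y := by ext; simp
  map_one' := by ext; simp [coeff_one, apply_ite φ]
  map_mul' x y := HahnSeries.map_mul (φ : A →ₙ+* B) (x := x) (y := y)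
  commutes' r := by ext; simp [algebraMap_apply, C_apply, coeff_single, apply_ite φ]

@[simp]
theorem coeff_mapAlgHom (φ : A →ₐ[R] B) (x : HahnSeries Γ A) (g : Γ) :
    (mapAlgHom φ x).coeff g = φ (x.coeff g) :=
  rfl

theorem mapAlgHom_injective {φ : A →ₐ[R] B} (hφ : Function.Injective φ) :
    Function.Injective (mapAlgHom (Γ := Γ) φ) := fun x y h =>
  HahnSeries.ext <| funext fun g => hφ <| by simpa using congr_arg (coeff · g) h

theorem exists_mapAlgHom_val_eq {S : Subalgebra R A} {x : HahnSeries Γ A}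
    (hx : ∀ g, x.coeff g ∈ S) : ∃ y : HahnSeries Γ S, mapAlgHom S.val y = x :=
  ⟨⟨fun g => ⟨x.coeff g, hx g⟩, x.isPWO_support.mono fun _ hg h => hg (Subtype.ext h)⟩, rfl⟩

end map

end HahnSeries

section lsDeriv

open HahnSeries

variable {A : Type*}

@[simp]
theorem lsDeriv_coeff [Ring A] (x : LaurentSeries A) (k : ℤ) :
    (lsDeriv x).coeff k = (k + 1) • x.coeff (k + 1) :=
  rfl

theorem lsDeriv_add [Ring A] (x y : LaurentSeries A) :
    lsDeriv (x + y) = lsDeriv x + lsDeriv y := by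
  ext k
  simp [smul_add]

theorem lsDeriv_mapAlgHom {R B : Type*} [CommSemiring R] [Ring A] [Algebra R A] [Ring B]
    [Algebra R B] (φ : A →ₐ[R] B) (x : LaurentSeries A) :
    lsDeriv (mapAlgHom φ x) = mapAlgHom φ (lsDeriv x) := by
  ext k
  simp only [lsDeriv_coeff, coeff_mapAlgHom, map_zsmul]

theorem le_orderTop_lsDeriv [Ring A] {x : LaurentSeries A} {m : ℤ}
    (hx : ((m + 1 : ℤ) : WithTop ℤ) ≤ x.orderTop) : (m : WithTop ℤ) ≤ (lsDeriv x).orderTop := by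
  refine le_orderTop_iff_forall.mpr fun k hk => ?_
  have hk' : k + 1 < m + 1 := add_lt_add_left (by exact_mod_cast hk) 1
  rw [lsDeriv_coeff, coeff_eq_zero_of_lt_orderTop (hx.trans_lt' (by exact_mod_cast hk')),
    smul_zero]

theorem zero_le_orderTop_lsDeriv [Ring A] {x : LaurentSeries A} (hx : 0 ≤ x.orderTop) :
    0 ≤ (lsDeriv x).orderTop := by
  refine le_orderTop_iff_forall.mpr fun k hk => ?_
  obtain hk' | hk' := (show k + 1 ≤ 0 by simpa using hk).lt_or_eq
  · rw [lsDeriv_coeff, coeff_eq_zero_of_lt_orderTop (hx.trans_lt' (by exact_mod_cast hk')),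
      smul_zero]
  · rw [lsDeriv_coeff, hk', zero_smul]

theorem mul_lsDeriv_eq_zero_of_coeff_mul_coeff [Ring A] {x : LaurentSeries A}
    (h : ∀ i j, x.coeff i * x.coeff j = 0) : x * lsDeriv x = 0 :=
  mul_eq_zero_of_coeff_mul_coeff fun i j => by rw [lsDeriv_coeff, mul_smul_comm, h, smul_zero]

end lsDeriv

section ode

open HahnSeries

theorem pow_mul_lsDeriv_eq_of_mul_self_eq_zero {R B : Type*} [CommRing R] [CommRing B]
    [Algebra R B] (p : R[X]) (N : ℕ) {G E : LaurentSeries B} (hE : E * E = 0)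
    (hEdE : E * lsDeriv E = 0)
    (hode : (G + E) ^ N * lsDeriv (G + E) = aeval (G + E) p) :
    G ^ N * lsDeriv E = aeval G p + aeval G (derivative p) * E - G ^ N * lsDeriv G
      - N * G ^ (N - 1) * lsDeriv G * E := by
  have hpow := aeval_add_of_sq_eq_zero (X ^ N : R[X]) G E (by rw [sq, hE])
  simp only [map_pow, aeval_X, derivative_X_pow, map_mul, map_natCast] at hpow
  rw [hpow, aeval_add_of_sq_eq_zero p G E (by rw [sq, hE]), lsDeriv_add] at hode
  linear_combination hode - N * G ^ (N - 1) * hEdE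

/-- The coefficient of `x ^ (m - 1)` in the linearised equation, `m` being the order of `E`. -/
theorem coeff_zero_pow_mul_zsmul_coeff_eq_zero {R B : Type*} [CommRing R] [CommRing B]
    [Algebra R B] (p : R[X]) (N : ℕ) {G E : LaurentSeries B} (hG : G ∈ nonnegSubalgebra ℤ R B)
    (hE : E * E = 0) (hEdE : E * lsDeriv E = 0)
    (hode : (G + E) ^ N * lsDeriv (G + E) = aeval (G + E) p) {m : ℤ} (hm : m = E.orderTop)
    (hmneg : m < 0) : G.coeff 0 ^ N * (m • E.coeff m) = 0 := by
  have hvanish : ∀ Z : LaurentSeries B, (m : WithTop ℤ) ≤ Z.orderTop → Z.coeff (m - 1) = 0 :=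
    fun Z hZ => coeff_eq_zero_of_lt_orderTop (hZ.trans_lt' (by exact_mod_cast sub_one_lt m))
  have hnonneg : ∀ Z ∈ nonnegSubalgebra ℤ R B, (m : WithTop ℤ) ≤ Z.orderTop :=
    fun Z hZ => (mem_nonnegSubalgebra.mp hZ).trans' (by exact_mod_cast hmneg.le)
  have hmulE : ∀ Z ∈ nonnegSubalgebra ℤ R B, (m : WithTop ℤ) ≤ (Z * E).orderTop := fun Z hZ => by
    simpa [hm] using (add_le_add (mem_nonnegSubalgebra.mp hZ) hm.le).trans orderTop_add_le_mul
  have haeval : ∀ q : R[X], aeval G q ∈ nonnegSubalgebra ℤ R B := fun q =>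
    Algebra.adjoin_le (Set.singleton_subset_iff.mpr hG) (aeval_mem_adjoin_singleton R G (p := q))
  have hGN := pow_mem hG N
  have hdG : lsDeriv G ∈ nonnegSubalgebra ℤ R B := zero_le_orderTop_lsDeriv hG
  have hcoeff := congr_arg (coeff · (m - 1))
    (pow_mul_lsDeriv_eq_of_mul_self_eq_zero p N hE hEdE hode)
  simp only [HahnSeries.coeff_sub, HahnSeries.coeff_add] at hcoeff
  rw [hvanish _ (hnonneg _ (haeval p)), hvanish _ (hmulE _ (haeval _)),
    hvanish _ (hnonneg _ (mul_mem hGN hdG)),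
    hvanish _ (hmulE _ (mul_mem (mul_mem (natCast_mem _ N) (pow_mem hG _)) hdG)),
    ← zero_add (m - 1), coeff_mul_of_le_orderTop hGN (le_orderTop_lsDeriv (by simpa using hm.le)),
    coeff_pow_zero_of_zero_le_orderTop hG, lsDeriv_coeff, sub_add_cancel] at hcoeff
  simpa using hcoeff

variable {𝕜 : Type*} [Field 𝕜] [CharZero 𝕜]

theorem coeff_neg_eq_zero_of_ode_of_sq {B : Type*} [CommRing B] [Algebra 𝕜 B] (p : 𝕜[X])
    (N : ℕ) {T : LaurentSeries B} (hode : T ^ N * lsDeriv T = aeval T p) {c : 𝕜} (hc : c ≠ 0)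
    (hsq : ∀ i < 0, ∀ j < 0, T.coeff i * T.coeff j = 0)
    (hlead : ∀ i < 0, T.coeff i * (T.coeff 0 - algebraMap 𝕜 B c) = 0) :
    ∀ i < 0, T.coeff i = 0 := by
  set E := truncLT 0 T
  have hEcoeff : ∀ i, E.coeff i = if i < 0 then T.coeff i else 0 := HahnSeries.coeff_truncLT 0 T
  have hEsq : ∀ i j, E.coeff i * E.coeff j = 0 := fun i j => by
    simp only [hEcoeff]
    split_ifs with hi hj
    · exact hsq i hi j hj
    all_goals simp
  have hG : T - E ∈ nonnegSubalgebra ℤ 𝕜 B :=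
    zero_le_orderTop_iff_forall.mpr fun i hi => by simp [hEcoeff, hi]
  suffices E = 0 by
    intro i hi
    simpa [hEcoeff, hi] using congr_arg (coeff · i) this
  by_contra hE0
  obtain ⟨m, hm⟩ := WithTop.ne_top_iff_exists.mp (orderTop_ne_top.mpr hE0)
  have hEm : E.coeff m ≠ 0 := coeff_orderTop_ne hm.symm
  have hmneg : m < 0 := by
    by_contra h
    exact hEm (by simp [hEcoeff, h])
  have hkey := coeff_zero_pow_mul_zsmul_coeff_eq_zero p N hG (mul_eq_zero_of_coeff_mul_coeff hEsq)
    (mul_lsDeriv_eq_zero_of_coeff_mul_coeff hEsq) (by rwa [sub_add_cancel]) hm hmneg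
  simp only [HahnSeries.coeff_sub, hEcoeff, lt_irrefl, if_false, sub_zero, hmneg, if_true] at hkey
  have hscale : T.coeff m * T.coeff 0 ^ N = T.coeff m * algebraMap 𝕜 B c ^ N := by
    obtain ⟨q, hq⟩ := sub_dvd_pow_sub_pow (T.coeff 0) (algebraMap 𝕜 B c) N
    rw [← sub_eq_zero, ← mul_sub, hq, ← mul_assoc, hlead m hmneg, zero_mul]
  have hsmul : (c ^ N * m) • T.coeff m = 0 := by
    rw [Algebra.smul_def, map_mul, map_pow, map_intCast]
    rw [zsmul_eq_mul] at hkey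
    linear_combination hkey - (m : B) * hscale
  rcases smul_eq_zero.mp hsmul with h | h
  · exact mul_ne_zero (pow_ne_zero N hc) (Int.cast_ne_zero.mpr hmneg.ne) h
  · exact hEm (by simpa [hEcoeff, hmneg] using h)

theorem coeff_neg_mem_pow_of_ode {A : Type*} [CommRing A] [Algebra 𝕜 A] (p : 𝕜[X]) (N : ℕ)
    {T : LaurentSeries A} (hode : T ^ N * lsDeriv T = aeval T p) {c : 𝕜} (hc : c ≠ 0)
    {I : Ideal A} (h0 : T.coeff 0 - algebraMap 𝕜 A c ∈ I) (hneg : ∀ i < 0, T.coeff i ∈ I)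
    (d : ℕ) : ∀ i < 0, T.coeff i ∈ I ^ (d + 1) := by
  induction d with
  | zero => simpa using hneg
  | succ d ih =>
    let π := Ideal.Quotient.mkₐ 𝕜 (I ^ (d + 2))
    have hodeπ : mapAlgHom π T ^ N * lsDeriv (mapAlgHom π T) = aeval (mapAlgHom π T) p := by
      rw [lsDeriv_mapAlgHom, ← map_pow, ← map_mul, hode, aeval_algHom_apply]
    have hsq : ∀ i < 0, ∀ j < 0, (mapAlgHom π T).coeff i * (mapAlgHom π T).coeff j = 0 := by
      intro i hi j hj
      rw [coeff_mapAlgHom, coeff_mapAlgHom, ← map_mul, Ideal.Quotient.mkₐ_eq_mk,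
        Ideal.Quotient.eq_zero_iff_mem]
      refine Ideal.pow_le_pow_right (show d + 2 ≤ (d + 1) + (d + 1) by omega) ?_
      rw [_root_.pow_add]
      exact Ideal.mul_mem_mul (ih i hi) (ih j hj)
    have hlead : ∀ i < 0, (mapAlgHom π T).coeff i *
        ((mapAlgHom π T).coeff 0 - algebraMap 𝕜 _ c) = 0 := by
      intro i hi
      rw [coeff_mapAlgHom, coeff_mapAlgHom, ← π.commutes c, ← map_sub, ← map_mul,
        Ideal.Quotient.mkₐ_eq_mk, Ideal.Quotient.eq_zero_iff_mem, pow_succ]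
      exact Ideal.mul_mem_mul (ih i hi) h0
    intro i hi
    simpa [π, Ideal.Quotient.eq_zero_iff_mem] using
      coeff_neg_eq_zero_of_ode_of_sq p N hodeπ hc hsq hlead i hi

theorem coeff_neg_eq_zero_of_ode_of_isNilpotent {A : Type*} [CommRing A] [Algebra 𝕜 A]
    (p : 𝕜[X]) (N : ℕ) {T : LaurentSeries A} (hode : T ^ N * lsDeriv T = aeval T p) {c : 𝕜}
    (hc : c ≠ 0) {I : Ideal A} (hI : IsNilpotent I) (h0 : T.coeff 0 - algebraMap 𝕜 A c ∈ I)
    (hneg : ∀ i < 0, T.coeff i ∈ I) : ∀ i < 0, T.coeff i = 0 := by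
  obtain ⟨k, hk⟩ := hI
  intro i hi
  have := Ideal.pow_le_pow_right k.le_succ (coeff_neg_mem_pow_of_ode p N hode hc h0 hneg k i hi)
  rwa [hk, Ideal.zero_eq_bot, Ideal.mem_bot] at this

open scoped IsMulCommutative in
theorem coeff_neg_eq_zero_of_ode_of_commute {M : Type*} [Ring M] [Algebra 𝕜 M]
    [FiniteDimensional 𝕜 M] (p : 𝕜[X]) (N : ℕ) {S : LaurentSeries M}
    (hcomm : ∀ i j, Commute (S.coeff i) (S.coeff j)) (hode : S ^ N * lsDeriv S = aeval S p)
    {c : 𝕜} (hc : c ≠ 0) (h0 : IsNilpotent (S.coeff 0 - algebraMap 𝕜 M c))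
    (hneg : ∀ i < 0, IsNilpotent (S.coeff i)) : ∀ i < 0, S.coeff i = 0 := by
  let K := Algebra.adjoin 𝕜 (Set.range S.coeff)
  have : IsMulCommutative K := Algebra.isMulCommutative_adjoin 𝕜 <| by
    rintro _ ⟨i, rfl⟩ _ ⟨j, rfl⟩
    exact hcomm i j
  obtain ⟨T, hT⟩ := exists_mapAlgHom_val_eq (S := K) fun i => Algebra.subset_adjoin ⟨i, rfl⟩
  have hinj : Function.Injective K.val := Subtype.val_injective
  have hodeT : T ^ N * lsDeriv T = aeval T p := mapAlgHom_injective hinj <| by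
    rw [map_mul, map_pow, ← lsDeriv_mapAlgHom, ← aeval_algHom_apply, hT, hode]
  have hcoeff : ∀ i, K.val (T.coeff i) = S.coeff i := fun i => by rw [← hT, coeff_mapAlgHom]
  have hnil : ∀ {x}, IsNilpotent (K.val x) → x ∈ nilradical K := (IsNilpotent.map_iff hinj).mp
  have hT0 : T.coeff 0 - algebraMap 𝕜 K c ∈ nilradical K :=
    hnil (by rwa [map_sub, AlgHom.commutes, hcoeff])
  have : IsArtinianRing K := IsArtinianRing.of_finite 𝕜 K
  have hTneg := coeff_neg_eq_zero_of_ode_of_isNilpotent p N hodeT hc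
    IsArtinianRing.isNilpotent_nilradical hT0 fun i hi => hnil (by rw [hcoeff]; exact hneg i hi)
  intro i hi
  rw [← hcoeff, hTneg i hi, map_zero]

end ode

theorem isUnit_of_isNilpotent_sub_algebraMap {𝕜 A : Type*} [Field 𝕜] [Ring A] [Algebra 𝕜 A]
    {a : A} {c : 𝕜} (hc : c ≠ 0) (h : IsNilpotent (a - algebraMap 𝕜 A c)) : IsUnit a := by
  simpa using h.isUnit_add_right_of_commute (hc.isUnit.map (algebraMap 𝕜 A))
    (Algebra.commute_algebraMap_right c _)

theorem evalLP_mem {A : Type*} [Ring A] [Algebra ℂ A] {B : Subalgebra ℂ A} {U : Aˣ}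
    (hU : (U : A) ∈ B) (hU' : ((U⁻¹ : Aˣ) : A) ∈ B) (u : LaurentPolynomial ℂ) :
    evalLP u U ∈ B := by
  have hzpow : ∀ z : ℤ, ((U ^ z : Aˣ) : A) ∈ B := by
    rintro (k | k)
    · simpa using pow_mem hU k
    · simpa [zpow_negSucc, ← inv_pow] using pow_mem hU' (k + 1)
  exact Subalgebra.sum_mem _ fun z _ => Subalgebra.smul_mem _ (hzpow z) _

open HahnSeries in
theorem stmt_3_general (n : ℕ) (p : Polynomial ℂ) (N_q : ℕ)
    (S : LaurentSeries (Matrix (Fin n) (Fin n) ℂ)) (hU : IsUnit S)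
    (hcomm : ∀ i j : ℤ, Commute (S.coeff i) (S.coeff j))
    (hode : S ^ N_q * lsDeriv S = Polynomial.aeval S p)
    (f : LaurentSeries ℂ) (hf : f ≠ 0) (hord : f.order = 0)
    (hnil : ∀ k : ℤ, IsNilpotent (S.coeff k - f.coeff k • (1 : Matrix (Fin n) (Fin n) ℂ))) :
    (∀ k : ℤ, k < 0 → S.coeff k = 0) ∧
    (∀ k : ℤ, k < 0 → ((↑(hU.unit⁻¹) : LaurentSeries (Matrix (Fin n) (Fin n) ℂ)).coeff k = 0)) ∧
    (∀ u : LaurentPolynomial ℂ, ∀ k : ℤ, k < 0 → (evalLP u hU.unit).coeff k = 0) := by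
  have hf0 : f.coeff 0 ≠ 0 := hord ▸ coeff_order_eq_zero.not.mpr hf
  have hnil' : ∀ k, IsNilpotent (S.coeff k - algebraMap ℂ _ (f.coeff k)) := by
    simpa [Algebra.algebraMap_eq_smul_one] using hnil
  have hSneg : ∀ k < 0, S.coeff k = 0 := coeff_neg_eq_zero_of_ode_of_commute p N_q hcomm hode hf0
    (hnil' 0) fun k hk => by simpa [coeff_eq_zero_of_lt_order (hord ▸ hk)] using hnil' k
  have hS : S ∈ nonnegSubalgebra ℤ ℂ _ :=
    mem_nonnegSubalgebra.mpr (zero_le_orderTop_iff_forall.mpr hSneg)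
  have hSinv : (↑hU.unit⁻¹ : LaurentSeries (Matrix (Fin n) (Fin n) ℂ)) ∈ nonnegSubalgebra ℤ ℂ _ :=
    zero_le_orderTop_of_mul hS (isUnit_of_isNilpotent_sub_algebraMap hf0 (hnil' 0)) <| by
      rw [hU.mul_val_inv]
      exact (nonnegSubalgebra ℤ ℂ _).one_mem
  exact ⟨hSneg, zero_le_orderTop_iff_forall.mp (mem_nonnegSubalgebra.mp hSinv), fun u =>
    zero_le_orderTop_iff_forall.mp (mem_nonnegSubalgebra.mp (evalLP_mem hS hSinv u))⟩

/-- Let `p ∈ ℂ[s]` be nonzero with `p, s^{N_q}` coprime (`N_q = 0` or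
`p(0) ≠ 0`), and let `S ∈ Mₙ(ℂ)((x))` be invertible with pairwise commuting
coefficients and `S^{N_q}·(dS/dx) = p(S)`.  If there is an `f ∈ ℂ((x))` of order `0`
(nonzero, of order `0`) such that every coefficient of `S − f·1ₙ` is nilpotent, then
`S` and `S⁻¹` have no negative-degree coefficients; consequently neither does `u(S)`
for any Laurent polynomial `u ∈ ℂ[s,s⁻¹]`. -/
theorem stmt_3 (n : ℕ) (hn : 0 < n) (p : Polynomial ℂ) (hp : p ≠ 0) (N_q : ℕ)
    (hco : N_q = 0 ∨ p.coeff 0 ≠ 0)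
    (S : LaurentSeries (Matrix (Fin n) (Fin n) ℂ)) (hU : IsUnit S)
    (hcomm : ∀ i j : ℤ, Commute (S.coeff i) (S.coeff j))
    (hode : S ^ N_q * lsDeriv S = Polynomial.aeval S p)
    (f : LaurentSeries ℂ) (hf : f ≠ 0) (hord : f.order = 0)
    (hnil : ∀ k : ℤ, IsNilpotent (S.coeff k - f.coeff k • (1 : Matrix (Fin n) (Fin n) ℂ))) :
    (∀ k : ℤ, k < 0 → S.coeff k = 0) ∧
    (∀ k : ℤ, k < 0 → ((↑(hU.unit⁻¹) : LaurentSeries (Matrix (Fin n) (Fin n) ℂ)).coeff k = 0)) ∧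
    (∀ u : LaurentPolynomial ℂ, ∀ k : ℤ, k < 0 → (evalLP u hU.unit).coeff k = 0) :=
  stmt_3_general n p N_q S hU hcomm hode f hf hord hnil
end

section
/- Let n ≥ 1, let p ∈ ℂ[s] be a nonzero polynomial and N_q ∈ ℕ such that p and s^{N_q} are coprime (i.e. N_q = 0 or p(0) ≠ 0). Let S ∈ Mₙ(ℂ)((x)) be invertible in Mₙ(ℂ)((x)), with pairwise commuting coefficients, satisfying S^{N_q}·(dS/dx) = p(S). Assume there exists a nonzero f ∈ ℂ((x)) of positive order such that every coefficient of S − f·1ₙ is a nilpotent matrix. Then N_q = 0, p(0) ≠ 0, the order of f equals 1, and the leading coefficient of f equals p(0). -/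
-- For commutative `R`, this instance and `HahnSeries.instAlgebra` are two `Algebra R R⸨X⸩`
-- structures that are not defeq at instance transparency; we keep the coefficientwise one only.
attribute [-instance] HahnSeries.powerSeriesAlgebra

open Polynomial HahnSeries

lemma coeff_lsDeriv {A : Type*} [Ring A] (f : LaurentSeries A) (k : ℤ) :
    (lsDeriv f).coeff k = (k + 1) • f.coeff (k + 1) := rfl

section Map

variable {Γ k R S : Type*} [AddCommMonoid Γ] [PartialOrder Γ] [IsOrderedCancelAddMonoid Γ]
  [CommSemiring k] [Semiring R] [Semiring S] [Algebra k R] [Algebra k S]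

noncomputable def HahnSeries.mapAlgHom_s4 (φ : R →ₐ[k] S) :
    HahnSeries Γ R →ₐ[k] HahnSeries Γ S where
  toFun x := x.map φ
  map_one' := HahnSeries.map_one (φ : R →+* S).toMonoidWithZeroHom
  map_mul' _ _ := HahnSeries.map_mul (φ : R →ₙ+* S)
  map_zero' := HahnSeries.map_zero (φ : ZeroHom R S)
  map_add' _ _ := HahnSeries.map_add (φ : R →+ S)
  commutes' r := by
    rw [algebraMap_apply, algebraMap_apply, ← φ.commutes]
    exact map_C _ (φ : R →+* S)

@[simp]
lemma HahnSeries.coeff_mapAlgHom_s4 (φ : R →ₐ[k] S) (x : HahnSeries Γ R) (g : Γ) :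
    (mapAlgHom_s4 φ x).coeff g = φ (x.coeff g) := rfl

lemma HahnSeries.mapAlgHom_injective_s4 {φ : R →ₐ[k] S} (hφ : Function.Injective φ) :
    Function.Injective (mapAlgHom_s4 φ : HahnSeries Γ R → HahnSeries Γ S) := fun _ _ h =>
  HahnSeries.ext <| funext fun g => hφ <| by rw [← coeff_mapAlgHom_s4, h, coeff_mapAlgHom_s4]

end Map

section Ode

variable {k R S : Type*} [CommRing k] [Ring R] [Ring S] [Algebra k R] [Algebra k S]

lemma mapAlgHom_lsDeriv (φ : R →ₐ[k] S) (x : LaurentSeries R) :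
    mapAlgHom_s4 φ (lsDeriv x) = lsDeriv (mapAlgHom_s4 φ x) := by
  ext g
  exact map_zsmul φ _ _

lemma mapAlgHom_pow_mul_lsDeriv_sub_aeval (φ : R →ₐ[k] S) (x : LaurentSeries R) (N : ℕ)
    (p : k[X]) :
    mapAlgHom_s4 φ (x ^ N * lsDeriv x - aeval x p) =
      mapAlgHom_s4 φ x ^ N * lsDeriv (mapAlgHom_s4 φ x) - aeval (mapAlgHom_s4 φ x) p := by
  rw [map_sub, map_mul, map_pow, mapAlgHom_lsDeriv, aeval_algHom_apply]

end Ode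

lemma nonempty_algHom_of_finite (K B : Type*) [Field K] [IsAlgClosed K] [CommRing B]
    [Nontrivial B] [Algebra K B] [Module.Finite K B] : Nonempty (B →ₐ[K] K) := by
  obtain ⟨m, hm⟩ := Ideal.exists_maximal B
  let _ := Ideal.Quotient.field m
  exact ⟨IsAlgClosed.lift.comp (Ideal.Quotient.mkₐ K m)⟩

lemma AlgHom.apply_eq_of_isNilpotent_sub {K B : Type*} [Field K] [Ring B] [Algebra K B]
    (χ : B →ₐ[K] K) {b : B} {c : K} (h : IsNilpotent (b - algebraMap K B c)) : χ b = c := by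
  have := isNilpotent_iff_eq_zero.1 (h.map χ)
  rwa [map_sub, AlgHom.commutes, Algebra.algebraMap_self_apply, sub_eq_zero] at this

def HahnSeries.codRestrict {Γ k R : Type*} [PartialOrder Γ] [CommSemiring k] [Semiring R]
    [Algebra k R] (A : Subalgebra k R) (x : HahnSeries Γ R) (hx : ∀ g, x.coeff g ∈ A) :
    HahnSeries Γ A where
  coeff g := ⟨x.coeff g, hx g⟩
  isPWO_support' := x.isPWO_support.mono fun _ hg h => hg (Subtype.ext h)

section Aeval

variable {R : Type*} [CommRing R] {x : LaurentSeries R}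

lemma zero_le_orderTop_aeval (hx : 0 ≤ x.orderTop) (q : R[X]) : 0 ≤ (aeval x q).orderTop := by
  induction q using Polynomial.induction_on with
  | C a =>
    rw [aeval_C, HahnSeries.algebraMap_apply, Algebra.algebraMap_self_apply, C_apply]
    exact orderTop_single_le
  | add p q hp hq =>
    exact (map_add (aeval x) p q) ▸ (le_min hp hq).trans min_orderTop_le_orderTop_add
  | monomial n a h =>
    rw [pow_succ, ← mul_assoc, map_mul, aeval_X]
    exact (add_nonneg h hx).trans orderTop_add_le_mul

lemma orderTop_le_orderTop_aeval_sub_C (hx : 0 ≤ x.orderTop) (p : R[X]) :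
    x.orderTop ≤ (aeval x p - HahnSeries.C (p.coeff 0)).orderTop := by
  have hdivX : aeval x p - HahnSeries.C (p.coeff 0) = x * aeval x p.divX := by
    have h := congrArg (aeval x) (X_mul_divX_add p)
    rw [map_add, map_mul, aeval_X, aeval_C, HahnSeries.algebraMap_apply,
      Algebra.algebraMap_self_apply] at h
    rw [← h, add_sub_cancel_right]
  calc x.orderTop = x.orderTop + 0 := (add_zero _).symm
    _ ≤ x.orderTop + (aeval x p.divX).orderTop := by gcongr; exact zero_le_orderTop_aeval hx _
    _ ≤ _ := hdivX ▸ orderTop_add_le_mul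

end Aeval

section Scalar

variable {K : Type*} [CommRing K] [IsDomain K] [CharZero K] {f : LaurentSeries K}

lemma coeff_lsDeriv_order_sub_one_ne_zero (hf : f.order ≠ 0) :
    (lsDeriv f).coeff (f.order - 1) ≠ 0 := by
  have hf0 : f ≠ 0 := by rintro rfl; exact hf order_zero
  rw [coeff_lsDeriv, sub_add_cancel]
  exact smul_ne_zero hf (coeff_order_eq_zero.not.2 hf0)

lemma lsDeriv_ne_zero (hf : f.order ≠ 0) : lsDeriv f ≠ 0 :=
  ne_zero_of_coeff_ne_zero (coeff_lsDeriv_order_sub_one_ne_zero hf)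

lemma order_lsDeriv (hf : f.order ≠ 0) : (lsDeriv f).order = f.order - 1 := by
  refine le_antisymm (order_le_of_coeff_ne_zero (coeff_lsDeriv_order_sub_one_ne_zero hf)) ?_
  rw [le_order_iff_forall (lsDeriv_ne_zero hf)]
  intro j hj
  rw [coeff_lsDeriv, coeff_eq_zero_of_lt_order (by omega), smul_zero]

lemma order_pow_mul_lsDeriv (hf : f.order ≠ 0) (N : ℕ) :
    (f ^ N * lsDeriv f).order = N * f.order + (f.order - 1) := by
  have hf0 : f ≠ 0 := by rintro rfl; exact hf order_zero
  rw [order_mul (pow_ne_zero _ hf0) (lsDeriv_ne_zero hf), order_pow, order_lsDeriv hf,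
    nsmul_eq_mul]

theorem order_eq_one_of_pow_mul_lsDeriv_eq_aeval {p : K[X]} {N : ℕ}
    (hco : N = 0 ∨ p.coeff 0 ≠ 0) (hord : 0 < f.order) (hode : f ^ N * lsDeriv f = aeval f p) :
    N = 0 ∧ p.coeff 0 ≠ 0 ∧ f.order = 1 ∧ f.coeff 1 = p.coeff 0 := by
  have hpos : 0 < f.orderTop := zero_lt_orderTop_of_order hord
  set g := aeval f p - HahnSeries.C (p.coeff 0)
  have hg : f.orderTop ≤ g.orderTop := orderTop_le_orderTop_aeval_sub_C hpos.le p
  have hp : aeval f p = HahnSeries.C (p.coeff 0) + g := (add_sub_cancel _ _).symm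
  have hp0 : p.coeff 0 ≠ 0 := by
    intro h0
    rw [hco.resolve_right (not_not.2 h0), pow_zero, one_mul, hp, h0, C_zero, zero_add] at hode
    have hle := hode ▸ hg
    rw [← order_eq_orderTop_of_ne_zero (by rintro rfl; simp at hord),
      ← order_eq_orderTop_of_ne_zero (lsDeriv_ne_zero hord.ne'), order_lsDeriv hord.ne'] at hle
    norm_cast at hle
    omega
  have hrhs : (aeval f p).order = 0 := by
    have hC : (HahnSeries.C (p.coeff 0) : LaurentSeries K).orderTop = 0 := by
      rw [C_apply, orderTop_single hp0, WithTop.coe_zero]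
    have htop : (aeval f p).orderTop = 0 := by
      rw [hp, orderTop_add_eq_left (hC ▸ hpos.trans_le hg), hC]
    exact_mod_cast (order_eq_orderTop_of_ne_zero (by rintro h; simp [h] at htop)).trans htop
  have hlhs := order_pow_mul_lsDeriv hord.ne' N
  rw [hode, hrhs] at hlhs
  have hd : f.order = 1 := by nlinarith
  have hN : N = 0 := by simpa [hd] using hlhs.symm
  refine ⟨hN, hp0, hd, ?_⟩
  have h0 := congrArg (fun x : LaurentSeries K => x.coeff 0) hode
  rwa [hN, pow_zero, one_mul, hp, HahnSeries.coeff_add, C_apply, coeff_single_same,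
    coeff_eq_zero_of_lt_orderTop (hpos.trans_le hg), add_zero, coeff_lsDeriv, zero_add,
    one_smul] at h0

end Scalar

theorem pow_mul_lsDeriv_eq_aeval_of_isNilpotent_sub {K M : Type*} [Field K] [IsAlgClosed K]
    [Ring M] [Nontrivial M] [Algebra K M] [FiniteDimensional K M] {S : LaurentSeries M}
    (hcomm : ∀ i j, Commute (S.coeff i) (S.coeff j)) {f : LaurentSeries K}
    (hnil : ∀ k, IsNilpotent (S.coeff k - algebraMap K M (f.coeff k))) {N : ℕ} {p : K[X]}
    (hode : S ^ N * lsDeriv S = aeval S p) : f ^ N * lsDeriv f = aeval f p := by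
  let A := Algebra.adjoin K (Set.range S.coeff)
  obtain ⟨χ⟩ : Nonempty (A →ₐ[K] K) := by
    have : IsMulCommutative A :=
      Algebra.isMulCommutative_adjoin K (by rintro _ ⟨i, rfl⟩ _ ⟨j, rfl⟩; exact hcomm i j)
    open scoped IsMulCommutative in exact nonempty_algHom_of_finite K A
  let T := codRestrict A S fun k => Algebra.subset_adjoin ⟨k, rfl⟩
  have hT : mapAlgHom_s4 A.val T = S := rfl
  have hχT : mapAlgHom_s4 χ T = f := by
    ext k
    exact χ.apply_eq_of_isNilpotent_sub
      ((IsNilpotent.map_iff (f := A.val) Subtype.val_injective).1 (hnil k))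
  have hodeT : T ^ N * lsDeriv T - aeval T p = 0 := by
    refine mapAlgHom_injective_s4 (φ := A.val) Subtype.val_injective ?_
    rw [mapAlgHom_pow_mul_lsDeriv_sub_aeval, hT, hode, sub_self, map_zero]
  have hodef := mapAlgHom_pow_mul_lsDeriv_sub_aeval χ T N p
  rw [hodeT, map_zero, hχT] at hodef
  exact sub_eq_zero.1 hodef.symm

theorem stmt_4_general (n : ℕ) (hn : 0 < n) (p : Polynomial ℂ) (N_q : ℕ)
    (hco : N_q = 0 ∨ p.coeff 0 ≠ 0)
    (S : LaurentSeries (Matrix (Fin n) (Fin n) ℂ))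
    (hcomm : ∀ i j : ℤ, Commute (S.coeff i) (S.coeff j))
    (hode : S ^ N_q * lsDeriv S = Polynomial.aeval S p)
    (f : LaurentSeries ℂ) (hord : 0 < f.order)
    (hnil : ∀ k : ℤ, IsNilpotent (S.coeff k - f.coeff k • (1 : Matrix (Fin n) (Fin n) ℂ))) :
    N_q = 0 ∧ p.coeff 0 ≠ 0 ∧ f.order = 1 ∧ f.coeff 1 = p.coeff 0 := by
  have : Nonempty (Fin n) := ⟨⟨0, hn⟩⟩
  refine order_eq_one_of_pow_mul_lsDeriv_eq_aeval hco hord ?_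
  refine pow_mul_lsDeriv_eq_aeval_of_isNilpotent_sub hcomm (fun k => ?_) hode
  rw [Algebra.algebraMap_eq_smul_one]
  exact hnil k

/-- Let `p ∈ ℂ[s]` be nonzero with `p, s^{N_q}` coprime (`N_q = 0` or
`p(0) ≠ 0`), and let `S ∈ Mₙ(ℂ)((x))` be invertible with pairwise commuting
coefficients and `S^{N_q}·(dS/dx) = p(S)`.  If there is a nonzero `f ∈ ℂ((x))` of
positive order such that every coefficient of `S − f·1ₙ` is nilpotent, then `N_q = 0`,
`p(0) ≠ 0`, the order of `f` is `1`, and the leading coefficient of `f` is `p(0)`. -/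
theorem stmt_4 (n : ℕ) (hn : 0 < n) (p : Polynomial ℂ) (hp : p ≠ 0) (N_q : ℕ)
    (hco : N_q = 0 ∨ p.coeff 0 ≠ 0)
    (S : LaurentSeries (Matrix (Fin n) (Fin n) ℂ)) (hU : IsUnit S)
    (hcomm : ∀ i j : ℤ, Commute (S.coeff i) (S.coeff j))
    (hode : S ^ N_q * lsDeriv S = Polynomial.aeval S p)
    (f : LaurentSeries ℂ) (hf : f ≠ 0) (hord : 0 < f.order)
    (hnil : ∀ k : ℤ, IsNilpotent (S.coeff k - f.coeff k • (1 : Matrix (Fin n) (Fin n) ℂ))) :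
    N_q = 0 ∧ p.coeff 0 ≠ 0 ∧ f.order = 1 ∧ f.coeff 1 = p.coeff 0 :=
  stmt_4_general n hn p N_q hco S hcomm hode f hord hnil
end

section
/- Let p ∈ ℂ[s] be a polynomial with p(0) ≠ 0. Then there exists exactly one f ∈ ℂ((x)) of positive order satisfying df/dx = p(f); moreover this f lies in x·ℂ[[x]], has order exactly 1, and its leading coefficient (the coefficient of x) equals p(0). -/
open PowerSeries LaurentSeries

namespace PowerSeries

section CommRing

variable {R : Type*} [CommRing R]

theorem constantCoeff_aeval (p : Polynomial R) (G : R⟦X⟧) :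
    constantCoeff (Polynomial.aeval G p) = p.eval (constantCoeff G) := by
  rw [Polynomial.aeval_def, Polynomial.hom_eval₂]
  simp

theorem coeff_aeval_eq_of_coeff_eq (p : Polynomial R) {A B : R⟦X⟧} {n : ℕ}
    (h : ∀ i ≤ n, coeff i A = coeff i B) :
    coeff n (Polynomial.aeval A p) = coeff n (Polynomial.aeval B p) := by
  have hAB : X ^ (n + 1) ∣ A - B :=
    X_pow_dvd_iff.2 fun i hi ↦ by rw [map_sub, h i (Nat.lt_succ_iff.1 hi), sub_self]
  have hp : A - B ∣ Polynomial.aeval A p - Polynomial.aeval B p := by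
    simpa only [Polynomial.eval_map_algebraMap] using
      Polynomial.sub_dvd_eval_sub A B (p.map (algebraMap R R⟦X⟧))
  rw [← sub_eq_zero, ← map_sub]
  exact X_pow_dvd_iff.1 (hAB.trans hp) n n.lt_succ_self

theorem coeff_one_of_derivative_eq_aeval (p : Polynomial R) {G : R⟦X⟧}
    (hG : d⁄dX R G = Polynomial.aeval G p) : coeff 1 G = p.eval (constantCoeff G) := by
  simpa [coeff_derivative, constantCoeff_aeval] using congr_arg (coeff 0) hG

end CommRing

section Field

variable {K : Type*} [Field K]

theorem derivative_eq_aeval_iff_coeff_succ [CharZero K] (p : Polynomial K) (G : K⟦X⟧) :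
    d⁄dX K G = Polynomial.aeval G p ↔
      ∀ n : ℕ, coeff (n + 1) G = coeff n (Polynomial.aeval G p) / (n + 1) := by
  simp only [PowerSeries.ext_iff, coeff_derivative]
  exact forall_congr' fun n ↦ (eq_div_iff (Nat.cast_add_one_ne_zero n)).symm

theorem eq_of_derivative_eq_aeval [CharZero K] (p : Polynomial K) {G H : K⟦X⟧}
    (h₀ : constantCoeff G = constantCoeff H) (hG : d⁄dX K G = Polynomial.aeval G p)
    (hH : d⁄dX K H = Polynomial.aeval H p) : G = H := by
  rw [derivative_eq_aeval_iff_coeff_succ] at hG hH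
  ext n
  induction n using Nat.strong_induction_on with
  | _ n ih =>
    rcases n with _ | n
    · simpa using h₀
    · rw [hG, hH, coeff_aeval_eq_of_coeff_eq p fun i hi ↦ ih i (Nat.lt_succ_of_le hi)]

-- Step `n + 1` evaluates `p` at the truncation below degree `n + 1` only, which is harmless by
-- `coeff_aeval_eq_of_coeff_eq` and makes the recursion well founded.
noncomputable def odeSolutionCoeff (p : Polynomial K) (c : K) : ℕ → K
  | 0 => c
  | n + 1 => coeff n (Polynomial.aeval
      (mk fun i ↦ if i < n + 1 then odeSolutionCoeff p c i else 0) p) / (n + 1)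

noncomputable def odeSolution (p : Polynomial K) (c : K) : K⟦X⟧ :=
  mk (odeSolutionCoeff p c)

theorem constantCoeff_odeSolution (p : Polynomial K) (c : K) :
    constantCoeff (odeSolution p c) = c := by
  rw [← coeff_zero_eq_constantCoeff_apply, odeSolution, coeff_mk, odeSolutionCoeff]

theorem derivative_odeSolution [CharZero K] (p : Polynomial K) (c : K) :
    d⁄dX K (odeSolution p c) = Polynomial.aeval (odeSolution p c) p := by
  refine (derivative_eq_aeval_iff_coeff_succ p _).2 fun n ↦ ?_
  rw [odeSolution, coeff_mk, odeSolutionCoeff]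
  congr 1
  refine coeff_aeval_eq_of_coeff_eq p fun i hi ↦ ?_
  rw [coeff_mk, coeff_mk, if_pos (Nat.lt_succ_of_le hi)]

theorem existsUnique_derivative_eq_aeval [CharZero K] (p : Polynomial K) (c : K) :
    ∃! G : K⟦X⟧, constantCoeff G = c ∧ d⁄dX K G = Polynomial.aeval G p :=
  ⟨odeSolution p c, ⟨constantCoeff_odeSolution p c, derivative_odeSolution p c⟩,
    fun _ ⟨h₀, hG⟩ ↦ eq_of_derivative_eq_aeval p (h₀.trans (constantCoeff_odeSolution p c).symm)
      hG (derivative_odeSolution p c)⟩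

end Field

end PowerSeries

section LaurentSeries

variable {R : Type*} [CommRing R]

theorem HahnSeries.ofPowerSeries_aeval (Γ : Type*) [Semiring Γ] [PartialOrder Γ]
    [IsStrictOrderedRing Γ] (p : Polynomial R) (G : R⟦X⟧) :
    ofPowerSeries Γ R (Polynomial.aeval G p) = Polynomial.aeval (ofPowerSeries Γ R G) p := by
  rw [Polynomial.aeval_def, Polynomial.aeval_def, Polynomial.hom_eval₂]
  rfl

theorem lsDeriv_coe (G : R⟦X⟧) : lsDeriv (G : R⸨X⸩) = (d⁄dX R G : R⸨X⸩) := by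
  ext k
  change (k + 1) • (G : R⸨X⸩).coeff (k + 1) = _
  rcases le_or_gt 0 k with hk | hk
  · lift k to ℕ using hk
    rw [← Nat.cast_succ, coeff_coe_powerSeries, coeff_coe_powerSeries, coeff_derivative,
      natCast_zsmul, nsmul_eq_mul, mul_comm, Nat.cast_succ]
  · rw [coeff_coe (d⁄dX R G), if_pos hk]
    rcases (Int.add_one_le_iff.2 hk).lt_or_eq with hk' | hk'
    · rw [coeff_coe, if_pos hk', smul_zero]
    · rw [hk', zero_smul]

theorem lsDeriv_coe_eq_aeval_iff (p : Polynomial R) (G : R⟦X⟧) :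
    lsDeriv (G : R⸨X⸩) = Polynomial.aeval (G : R⸨X⸩) p ↔ d⁄dX R G = Polynomial.aeval G p := by
  rw [lsDeriv_coe, ← HahnSeries.ofPowerSeries_aeval]
  exact HahnSeries.ofPowerSeries_injective.eq_iff

theorem LaurentSeries.exists_coe_eq_of_order_pos {f : R⸨X⸩} (hf : 0 < f.order) :
    ∃ G : R⟦X⟧, constantCoeff G = 0 ∧ (G : R⸨X⸩) = f := by
  lift f.order to ℕ using hf.le with n hn
  refine ⟨X ^ n * f.powerSeriesPart, ?_, X_order_mul_powerSeriesPart hn⟩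
  rw [map_mul, map_pow, constantCoeff_X, zero_pow (by exact_mod_cast hf.ne'), zero_mul]

theorem LaurentSeries.order_coe_eq_one {G : R⟦X⟧} (h₀ : constantCoeff G = 0)
    (h₁ : coeff 1 G ≠ 0) : (G : R⸨X⸩).order = 1 := by
  have h₁' : (G : R⸨X⸩).coeff 1 ≠ 0 := by rwa [← Nat.cast_one, coeff_coe_powerSeries]
  have h_nonpos : ∀ k ≤ 0, (G : R⸨X⸩).coeff k = 0 := fun k hk ↦ by
    rw [coeff_coe]
    split_ifs with hk'
    · rfl
    · rwa [show k = 0 by omega, Int.natAbs_zero, coeff_zero_eq_constantCoeff_apply]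
  refine (HahnSeries.order_le_of_coeff_ne_zero h₁').antisymm ?_
  by_contra! h
  exact HahnSeries.ne_zero_of_coeff_ne_zero h₁'
    (HahnSeries.coeff_order_eq_zero.1 (h_nonpos _ (by omega)))

end LaurentSeries

/-- Let `p ∈ ℂ[s]` with `p(0) ≠ 0`.  There is exactly one `f ∈ ℂ((x))` of
positive order with `df/dx = p(f)`; moreover this `f` lies in `x·ℂ[[x]]`, has order
exactly `1`, and its leading coefficient (the coefficient of `x`) is `p(0)`. -/
theorem stmt_5 (p : Polynomial ℂ) (hp : p.coeff 0 ≠ 0) :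
    (∃! f : LaurentSeries ℂ, f ≠ 0 ∧ 0 < f.order ∧ lsDeriv f = Polynomial.aeval f p) ∧
    (∀ f : LaurentSeries ℂ, (f ≠ 0 ∧ 0 < f.order ∧ lsDeriv f = Polynomial.aeval f p) →
      (∀ k : ℤ, k ≤ 0 → f.coeff k = 0) ∧ f.order = 1 ∧ f.coeff 1 = p.coeff 0) := by
  obtain ⟨G, ⟨hG₀, hG⟩, hG_unique⟩ := existsUnique_derivative_eq_aeval p 0
  have hG₁ : coeff 1 G = p.coeff 0 := by
    rw [coeff_one_of_derivative_eq_aeval p hG, hG₀, Polynomial.coeff_zero_eq_eval_zero]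
  have hcoeff₁ : (G : ℂ⸨X⸩).coeff 1 = p.coeff 0 := by
    rw [← hG₁, ← coeff_coe_powerSeries, Nat.cast_one]
  have horder : (G : ℂ⸨X⸩).order = 1 := order_coe_eq_one hG₀ (hG₁ ▸ hp)
  have h_eq : ∀ f : ℂ⸨X⸩, (f ≠ 0 ∧ 0 < f.order ∧ lsDeriv f = Polynomial.aeval f p) → f = G := by
    rintro f ⟨-, hf, hf'⟩
    obtain ⟨F, hF₀, rfl⟩ := exists_coe_eq_of_order_pos hf
    rw [hG_unique F ⟨hF₀, (lsDeriv_coe_eq_aeval_iff p F).1 hf'⟩]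
  refine ⟨⟨G, ⟨?_, by omega, (lsDeriv_coe_eq_aeval_iff p G).2 hG⟩, h_eq⟩, fun f hf ↦ ?_⟩
  · exact HahnSeries.ne_zero_of_coeff_ne_zero (hcoeff₁ ▸ hp)
  obtain rfl := h_eq f hf
  exact ⟨fun k hk ↦ HahnSeries.coeff_eq_zero_of_lt_order (by omega), horder, hcoeff₁⟩
end

section
/- Let p ∈ ℂ[s] be a polynomial with p(0) ≠ 0 and let n ≥ 1. Let J_n ∈ Mₙ(ℂ) be the nilpotent Jordan block (entries 1 on the superdiagonal, 0 elsewhere). Then there exists a unique S ∈ Mₙ(ℂ)[[x]] with constant coefficient J_n satisfying dS/dx = p(S). Moreover, every coefficient of S lies in the unital subalgebra ℂ[J_n] of Mₙ(ℂ) generated by J_n (in particular the coefficients of S pairwise commute), S is invertible in Mₙ(ℂ)((x)), and the image of S under the coefficientwise application of the ℂ-algebra homomorphism ℂ[J_n] → ℂ sending J_n to 0 is a power series of order 1 with leading coefficient p(0). -/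
/-!
Comparing coefficients, `S' = p(S)` reads `(k + 1) S_{k+1} = [x^k] p(S)`, and `[x^k] p(S)`
only involves `S_0, …, S_k`. Over a field of characteristic zero this determines `S` from `S_0`
recursively, in any algebra. Running the same recursion inside the subalgebra `ℂ[J]` and
invoking uniqueness puts every coefficient in `ℂ[J]`. Each `q(J) ∈ ℂ[J]` is `q(0)` plus a
nilpotent, which produces the scalar series `g`. Finally `S_1 = p(J)` is a unit because
`p(0) ≠ 0`, so `S = J + x · (unit)` is a unit of the Laurent series: `x` is invertible there and
`J` is a commuting nilpotent.
-/

/-- Formal derivative of a power series (over a possibly noncommutative ring). -/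
noncomputable def psDeriv {A : Type*} [Ring A] (f : PowerSeries A) : PowerSeries A :=
  PowerSeries.mk fun k => (k + 1) • PowerSeries.coeff (R := A) (k + 1) f

/-- The `n × n` nilpotent Jordan block `Jₙ` (ones on the superdiagonal). -/
def jordanBlock (n : ℕ) : Matrix (Fin n) (Fin n) ℂ :=
  Matrix.of fun i j => if (i : ℕ) + 1 = (j : ℕ) then 1 else 0

open scoped Polynomial

namespace Polynomial

variable {K A : Type*} [CommRing K] [Ring A] [Algebra K A] {x : A}

theorem isNilpotent_aeval_sub_algebraMap_coeff_zero (hx : IsNilpotent x) (q : K[X]) :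
    IsNilpotent (aeval x q - algebraMap K A (q.coeff 0)) := by
  have hq : aeval x q = x * aeval x q.divX + algebraMap K A (q.coeff 0) := by
    conv_lhs => rw [← X_mul_divX_add q]
    rw [map_add, map_mul, aeval_X, aeval_C]
  rw [hq, add_sub_cancel_right]
  exact (Algebra.commute_of_mem_adjoin_self (aeval_mem_adjoin_singleton K x)).isNilpotent_mul_right
    hx

theorem isUnit_aeval_of_isNilpotent (hx : IsNilpotent x) {q : K[X]}
    (hq : IsUnit (q.coeff 0)) : IsUnit (aeval x q) := by
  rw [← sub_add_cancel (aeval x q) (algebraMap K A (q.coeff 0))]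
  exact (isNilpotent_aeval_sub_algebraMap_coeff_zero hx q).isUnit_add_right_of_commute (hq.map _)
    (Algebra.commute_algebraMap_right _ _)

end Polynomial

section Nilpotent

variable {K A : Type*} [Ring A] {x : A}

theorem exists_isNilpotent_sub_algebraMap_of_mem_adjoin [CommRing K] [Algebra K A]
    (hx : IsNilpotent x) {c : A} (hc : c ∈ Algebra.adjoin K {x}) :
    ∃ α : K, IsNilpotent (c - algebraMap K A α) := by
  rw [Algebra.adjoin_singleton_eq_range_aeval] at hc
  obtain ⟨q, rfl⟩ := hc
  exact ⟨q.coeff 0, Polynomial.isNilpotent_aeval_sub_algebraMap_coeff_zero hx q⟩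

theorem eq_of_isNilpotent_sub_algebraMap [Field K] [Algebra K A] [Nontrivial A]
    {a : A} {α β : K} (hα : IsNilpotent (a - algebraMap K A α))
    (hβ : IsNilpotent (a - algebraMap K A β)) : α = β := by
  have hcomm : Commute (a - algebraMap K A α) (a - algebraMap K A β) :=
    ((Commute.refl a).sub_right (Algebra.commute_algebraMap_right _ _)).sub_left
      (Algebra.commute_algebraMap_left _ _)
  have h := hcomm.isNilpotent_sub hα hβ
  rw [sub_sub_sub_cancel_left, ← map_sub] at h
  have := (isNilpotent_iff_eq_zero.1 ((IsNilpotent.map_iff (algebraMap K A).injective).1 h))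
  exact (sub_eq_zero.1 this).symm

end Nilpotent

open PowerSeries

namespace PowerSeries

section Trunc

variable {R : Type*} [Semiring R] {n : ℕ}

theorem trunc_eq_trunc_iff {f g : R⟦X⟧} :
    trunc n f = trunc n g ↔ ∀ i < n, coeff i f = coeff i g := by
  refine ⟨fun h i hi => ?_, fun h => Polynomial.ext fun i => ?_⟩
  · simpa [coeff_trunc, hi] using congr(Polynomial.coeff $h i)
  · simp only [coeff_trunc]
    split_ifs with hi
    exacts [h i hi, rfl]

theorem trunc_mul_congr {f₁ f₂ g₁ g₂ : R⟦X⟧} (hf : trunc n f₁ = trunc n f₂)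
    (hg : trunc n g₁ = trunc n g₂) : trunc n (f₁ * g₁) = trunc n (f₂ * g₂) := by
  refine trunc_eq_trunc_iff.2 fun i hi => ?_
  rw [coeff_mul, coeff_mul]
  refine Finset.sum_congr rfl fun x hx => ?_
  rw [trunc_eq_trunc_iff.1 hf _ ((Finset.HasAntidiagonal.antidiagonal.fst_le hx).trans_lt hi),
    trunc_eq_trunc_iff.1 hg _ ((Finset.HasAntidiagonal.antidiagonal.snd_le hx).trans_lt hi)]

theorem trunc_pow_congr {f g : R⟦X⟧} (h : trunc n f = trunc n g) (m : ℕ) :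
    trunc n (f ^ m) = trunc n (g ^ m) := by
  induction m with
  | zero => rfl
  | succ m ih => rw [pow_succ, pow_succ]; exact trunc_mul_congr ih h

theorem trunc_aeval_congr {K : Type*} [CommSemiring K] [Algebra K R] {f g : R⟦X⟧}
    (h : trunc n f = trunc n g) (p : K[X]) :
    trunc n (Polynomial.aeval f p) = trunc n (Polynomial.aeval g p) := by
  induction p using Polynomial.induction_on' with
  | add p q hp hq => rw [map_add, map_add, map_add, map_add, hp, hq]
  | monomial k a =>
    rw [Polynomial.aeval_monomial, Polynomial.aeval_monomial]
    exact trunc_mul_congr rfl (trunc_pow_congr h k)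

end Trunc

theorem commute_C_iff {R : Type*} [Semiring R] {a : R} {f : R⟦X⟧} :
    Commute (C a) f ↔ ∀ k, Commute a (coeff k f) := by
  refine ⟨fun h k => ?_, fun h => ext fun k => ?_⟩
  · simpa [Commute, SemiconjBy, coeff_C_mul, coeff_mul_C] using congr(coeff k $h.eq)
  · rw [coeff_C_mul, coeff_mul_C, (h k).eq]

theorem constantCoeff_aeval_s8 {K R : Type*} [CommSemiring K] [Semiring R] [Algebra K R]
    (f : R⟦X⟧) (p : K[X]) :
    constantCoeff (Polynomial.aeval f p) = Polynomial.aeval (constantCoeff f) p := by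
  rw [Polynomial.aeval_def, Polynomial.hom_eval₂, Polynomial.aeval_def]
  congr 1

theorem isUnit_ofPowerSeries_of_isNilpotent_constantCoeff {R : Type*} [Ring R] {f : R⟦X⟧}
    (h₀ : IsNilpotent (constantCoeff f)) (h₁ : IsUnit (coeff 1 f))
    (hf : ∀ k, Commute (constantCoeff f) (coeff k f)) :
    IsUnit (HahnSeries.ofPowerSeries ℤ R f) := by
  have hX : IsUnit (HahnSeries.single (1 : ℤ) (1 : R)) :=
    ⟨⟨_, HahnSeries.single (-1) 1, by rw [HahnSeries.single_mul_single, add_neg_cancel, one_mul,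
      HahnSeries.single_zero_one], by rw [HahnSeries.single_mul_single, neg_add_cancel, one_mul,
      HahnSeries.single_zero_one]⟩, rfl⟩
  have hshift : IsUnit (mk fun k => coeff (k + 1) f) := by
    rw [isUnit_iff_constantCoeff, ← coeff_zero_eq_constantCoeff_apply, coeff_mk]
    exact h₁
  have hcomm : Commute (C (constantCoeff f)) (X * mk fun k => coeff (k + 1) f) := by
    refine (commute_X _).mul_right (commute_C_iff.2 fun k => ?_)
    rw [coeff_mk]
    exact hf (k + 1)
  rw [eq_X_mul_shift_add_const f, map_add, map_mul, HahnSeries.ofPowerSeries_X]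
  exact ((h₀.map C).map _).isUnit_add_left_of_commute (hX.mul (hshift.map _))
    (by simpa only [map_mul, HahnSeries.ofPowerSeries_X] using
      hcomm.map (HahnSeries.ofPowerSeries ℤ R))

end PowerSeries

section AutonomousODE

variable {K R : Type*} [Field K] [Ring R] [Algebra K R]

theorem coeff_psDeriv {A : Type*} [Ring A] (f : A⟦X⟧) (k : ℕ) :
    coeff k (psDeriv f) = (k + 1) • coeff (k + 1) f :=
  coeff_mk _ _

theorem psDeriv_map {A B : Type*} [Ring A] [Ring B] (φ : A →+* B) (f : A⟦X⟧) :
    psDeriv (map φ f) = map φ (psDeriv f) := by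
  ext k
  simp [coeff_psDeriv]

-- `[x^k] p(S)` only involves `S_0, …, S_k`, so truncating at degree `k` loses nothing and makes
-- the recursion well founded.
noncomputable def psDerivSolutionCoeff (a : R) (p : K[X]) : ℕ → R
  | 0 => a
  | k + 1 => ((k : K) + 1)⁻¹ • coeff k
      (Polynomial.aeval (mk fun i => if _ : i ≤ k then psDerivSolutionCoeff a p i else 0) p)

noncomputable def psDerivSolution (a : R) (p : K[X]) : R⟦X⟧ :=
  mk (psDerivSolutionCoeff a p)

theorem constantCoeff_psDerivSolution (a : R) (p : K[X]) :
    constantCoeff (psDerivSolution a p) = a := by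
  rw [psDerivSolution, ← coeff_zero_eq_constantCoeff_apply, coeff_mk, psDerivSolutionCoeff]

variable [CharZero K]

theorem psDeriv_eq_aeval_iff {S : R⟦X⟧} {p : K[X]} :
    psDeriv S = Polynomial.aeval S p ↔
      ∀ k : ℕ, coeff (k + 1) S = ((k : K) + 1)⁻¹ • coeff k (Polynomial.aeval S p) := by
  refine PowerSeries.ext_iff.trans (forall_congr' fun k => ?_)
  rw [coeff_psDeriv, eq_inv_smul_iff₀ (Nat.cast_add_one_ne_zero k), ← Nat.cast_succ,
    Nat.cast_smul_eq_nsmul]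

theorem eq_of_psDeriv_eq_aeval {p : K[X]} {S T : R⟦X⟧} (hS : psDeriv S = Polynomial.aeval S p)
    (hT : psDeriv T = Polynomial.aeval T p) (h₀ : constantCoeff S = constantCoeff T) : S = T := by
  suffices h : ∀ n, trunc n S = trunc n T from
    ext fun k => trunc_eq_trunc_iff.1 (h (k + 1)) k k.lt_succ_self
  intro n
  induction n with
  | zero => rfl
  | succ n ih =>
    rw [trunc_succ, trunc_succ, ih]
    congr 2
    cases n with
    | zero => simpa using h₀
    | succ m =>
      rw [psDeriv_eq_aeval_iff.1 hS, psDeriv_eq_aeval_iff.1 hT,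
        trunc_eq_trunc_iff.1 (trunc_aeval_congr ih p) m m.lt_succ_self]

theorem psDeriv_psDerivSolution (a : R) (p : K[X]) :
    psDeriv (psDerivSolution a p) = Polynomial.aeval (psDerivSolution a p) p := by
  refine psDeriv_eq_aeval_iff.2 fun k => ?_
  have htrunc : trunc (k + 1) (mk fun i => if _ : i ≤ k then psDerivSolutionCoeff a p i else 0) =
      trunc (k + 1) (psDerivSolution a p) :=
    trunc_eq_trunc_iff.2 fun i hi => by
      rw [psDerivSolution, coeff_mk, coeff_mk, dif_pos (Nat.lt_succ_iff.1 hi)]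
  rw [psDerivSolution, coeff_mk, psDerivSolutionCoeff, ← psDerivSolution,
    trunc_eq_trunc_iff.1 (trunc_aeval_congr htrunc p) k k.lt_succ_self]

theorem existsUnique_psDeriv_eq_aeval (a : R) (p : K[X]) :
    ∃! S : R⟦X⟧, constantCoeff S = a ∧ psDeriv S = Polynomial.aeval S p :=
  ⟨psDerivSolution a p, ⟨constantCoeff_psDerivSolution a p, psDeriv_psDerivSolution a p⟩,
    fun _ ⟨h₀, hS⟩ => eq_of_psDeriv_eq_aeval hS (psDeriv_psDerivSolution a p)
      (h₀.trans (constantCoeff_psDerivSolution a p).symm)⟩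

theorem coeff_mem_of_psDeriv_eq_aeval (B : Subalgebra K R) {p : K[X]} {S : R⟦X⟧}
    (hS : psDeriv S = Polynomial.aeval S p) (h₀ : constantCoeff S ∈ B) (k : ℕ) :
    coeff k S ∈ B := by
  obtain ⟨T, hT₀, hT⟩ := (existsUnique_psDeriv_eq_aeval (⟨_, h₀⟩ : B) p).exists
  have hBT : psDeriv (mapAlgHom B.val T) = Polynomial.aeval (mapAlgHom B.val T) p := by
    rw [Polynomial.aeval_algHom_apply, mapAlgHom_apply, mapAlgHom_apply, psDeriv_map, hT]
  have hBT₀ : constantCoeff S = constantCoeff (mapAlgHom B.val T) := by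
    rw [mapAlgHom_apply, ← coeff_zero_eq_constantCoeff_apply (map _ T), coeff_map,
      coeff_zero_eq_constantCoeff_apply T, hT₀]
    rfl
  rw [eq_of_psDeriv_eq_aeval hS hBT hBT₀, mapAlgHom_apply, coeff_map]
  exact Subtype.prop _

theorem coeff_one_of_psDeriv_eq_aeval {p : K[X]} {S : R⟦X⟧}
    (hS : psDeriv S = Polynomial.aeval S p) :
    coeff 1 S = Polynomial.aeval (constantCoeff S) p := by
  simpa [constantCoeff_aeval_s8] using psDeriv_eq_aeval_iff.1 hS 0

end AutonomousODE

theorem isNilpotent_jordanBlock (n : ℕ) : IsNilpotent (jordanBlock n) := by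
  have hupper : (jordanBlock n).IsUpperTriangular := fun i j (hji : j < i) =>
    if_neg (by rw [Fin.lt_def] at hji; omega)
  have hchar : (jordanBlock n).charpoly = Polynomial.X ^ n := by
    rw [Matrix.charpoly_of_isUpperTriangular _ hupper]
    simp [jordanBlock]
  exact ⟨n, by
    rw [← Polynomial.aeval_X_pow (R := ℂ), ← hchar, Matrix.aeval_self_charpoly]⟩

/-- Let `p ∈ ℂ[s]` with `p(0) ≠ 0` and `n ≥ 1`.  There is a unique
`S ∈ Mₙ(ℂ)[[x]]` with constant coefficient `Jₙ` satisfying `dS/dx = p(S)`.  Moreover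
every coefficient of `S` lies in the unital subalgebra `ℂ[Jₙ]` (in particular the
coefficients pairwise commute), `S` is invertible in `Mₙ(ℂ)((x))`, and the image of
`S` under the coefficientwise homomorphism `ℂ[Jₙ] → ℂ`, `Jₙ ↦ 0` (equivalently, the
unique scalar series `g` whose difference from `S` has all coefficients nilpotent)
has order `1` and leading coefficient `p(0)`. -/
theorem stmt_8 (n : ℕ) (hn : 0 < n) (p : Polynomial ℂ) (hp : p.coeff 0 ≠ 0) :
    (∃! S : PowerSeries (Matrix (Fin n) (Fin n) ℂ),
        PowerSeries.constantCoeff (R := Matrix (Fin n) (Fin n) ℂ) S = jordanBlock n ∧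
        psDeriv S = Polynomial.aeval S p) ∧
    (∀ S : PowerSeries (Matrix (Fin n) (Fin n) ℂ),
        (PowerSeries.constantCoeff (R := Matrix (Fin n) (Fin n) ℂ) S = jordanBlock n ∧
          psDeriv S = Polynomial.aeval S p) →
      (∀ k : ℕ, PowerSeries.coeff (R := (Matrix (Fin n) (Fin n) ℂ)) k S ∈
          Algebra.adjoin ℂ ({jordanBlock n} : Set (Matrix (Fin n) (Fin n) ℂ))) ∧
      (∀ i j : ℕ, Commute (PowerSeries.coeff (R := (Matrix (Fin n) (Fin n) ℂ)) i S)
          (PowerSeries.coeff (R := (Matrix (Fin n) (Fin n) ℂ)) j S)) ∧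
      IsUnit (HahnSeries.ofPowerSeries ℤ (Matrix (Fin n) (Fin n) ℂ) S) ∧
      (∃! g : PowerSeries ℂ,
          ∀ k : ℕ, IsNilpotent (PowerSeries.coeff (R := (Matrix (Fin n) (Fin n) ℂ)) k S -
            PowerSeries.coeff (R := ℂ) k g • (1 : Matrix (Fin n) (Fin n) ℂ))) ∧
      (∀ g : PowerSeries ℂ,
          (∀ k : ℕ, IsNilpotent (PowerSeries.coeff (R := (Matrix (Fin n) (Fin n) ℂ)) k S -
            PowerSeries.coeff (R := ℂ) k g • (1 : Matrix (Fin n) (Fin n) ℂ))) →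
          g.order = 1 ∧ PowerSeries.coeff (R := ℂ) 1 g = p.coeff 0)) := by
  have : Nonempty (Fin n) := ⟨⟨0, hn⟩⟩
  have hJ := isNilpotent_jordanBlock n
  refine ⟨existsUnique_psDeriv_eq_aeval _ p, fun S ⟨hS₀, hS⟩ => ?_⟩
  simp only [← Algebra.algebraMap_eq_smul_one]
  have hmem : ∀ k, coeff k S ∈ Algebra.adjoin ℂ {jordanBlock n} :=
    coeff_mem_of_psDeriv_eq_aeval _ hS (hS₀ ▸ Algebra.self_mem_adjoin_singleton ℂ _)
  have hJS k : Commute (jordanBlock n) (coeff k S) := Algebra.commute_of_mem_adjoin_self (hmem k)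
  have hS₁ : coeff 1 S = Polynomial.aeval (jordanBlock n) p := by
    rw [coeff_one_of_psDeriv_eq_aeval hS, hS₀]
  have hα₀ : IsNilpotent (coeff 0 S - algebraMap ℂ _ 0) := by
    simpa [coeff_zero_eq_constantCoeff_apply, hS₀] using hJ
  have hα₁ : IsNilpotent (coeff 1 S - algebraMap ℂ _ (p.coeff 0)) :=
    hS₁ ▸ Polynomial.isNilpotent_aeval_sub_algebraMap_coeff_zero hJ p
  choose α hα using fun k => exists_isNilpotent_sub_algebraMap_of_mem_adjoin hJ (hmem k)
  refine ⟨hmem, fun i j => Algebra.commute_of_mem_adjoin_singleton_of_commute (hmem j)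
    (hJS i).symm, ?_, ⟨mk α, fun k => by simpa using hα k, fun g hg => ext fun k => ?_⟩,
    fun g hg => ?_⟩
  · refine isUnit_ofPowerSeries_of_isNilpotent_constantCoeff (hS₀ ▸ hJ) ?_ (hS₀ ▸ hJS)
    exact hS₁ ▸ Polynomial.isUnit_aeval_of_isNilpotent hJ hp.isUnit
  · simpa using eq_of_isNilpotent_sub_algebraMap (hg k) (hα k)
  · have hg₀ : coeff 0 g = 0 := eq_of_isNilpotent_sub_algebraMap (hg 0) hα₀
    have hg₁ : coeff 1 g = p.coeff 0 := eq_of_isNilpotent_sub_algebraMap (hg 1) hα₁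
    refine ⟨?_, hg₁⟩
    exact_mod_cast order_eq_nat.2 ⟨hg₁ ▸ hp, fun i hi => by interval_cases i; exact hg₀⟩
end

section
/- Let m ≥ 1, p ≥ 1 and i ∈ ℤ. Let B ∈ Mₘ(ℂ)((y)) have pairwise commuting coefficients, and let g ∈ ℂ((y)) be nonzero such that every coefficient of B − g·1ₘ is a nilpotent matrix. Suppose that the support of B^p is contained in pℤ (the coefficient of y^k in B^p vanishes unless p divides k) and that the support of g is contained in i + pℤ. Then the support of B is contained in i + pℤ (the coefficient of y^k in B vanishes unless k ≡ i mod p). -/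
/-!
Let `ω` be a primitive `p`-th root of unity and `C(y) = ω^{-i} B(ωy)`, whose `k`-th coefficient
is `ω^{k-i} B_k`. Since `B^p` only involves exponents in `pℤ`, `C^p = B^p`. Work in the commutative
Artinian algebra generated by the coefficients of `B`. Off `i + pℤ` the coefficients of `g` vanish,
so those of `B` are nilpotent, hence `C - B` is nilpotent, and `B = g + (B - g)` is a unit. Then
`(C - B) · ∑ C^t B^{p-1-t} = C^p - B^p = 0`, and the sum is `p B^{p-1}` plus a nilpotent, so a unit.
So `C = B`, i.e. `(ω^{k-i} - 1) B_k = 0` for all `k`, and `ω^{k-i} ≠ 1` off `i + pℤ`.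
-/

open Finset HahnSeries

theorem eq_of_pow_eq_of_isNilpotent_sub {S : Type*} [CommRing S] {x y : S} {p : ℕ}
    (hxy : x ^ p = y ^ p) (hnil : IsNilpotent (x - y)) (hy : IsUnit ((p : S) * y ^ (p - 1))) :
    x = y := by
  set U := ∑ t ∈ range p, x ^ t * y ^ (p - 1 - t)
  have hU : U - p * y ^ (p - 1) ∈ nilradical S := by
    have hq : Ideal.Quotient.mk (nilradical S) x = Ideal.Quotient.mk _ y :=
      Ideal.Quotient.eq.mpr hnil
    refine Ideal.Quotient.eq.mp ?_
    simp only [U, map_sum, map_mul, map_pow, map_natCast, hq, geom_sum₂_self]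
  have hUunit : IsUnit U := by
    simpa using IsNilpotent.isUnit_add_left_of_commute hU hy (Commute.all _ _)
  rw [← sub_eq_zero, ← hUunit.mul_right_eq_zero, geom_sum₂_mul, hxy, sub_self]

namespace HahnSeries

variable {Γ : Type*} [AddCommMonoid Γ] [PartialOrder Γ] [IsOrderedCancelAddMonoid Γ]

section Map

variable {R S : Type*} [Semiring R] [Semiring S]

def mapRingHom (f : R →+* S) : HahnSeries Γ R →+* HahnSeries Γ S where
  toFun x := x.map f
  map_one' := HahnSeries.map_one f.toMonoidWithZeroHom
  map_mul' _ _ := HahnSeries.map_mul (f : R →ₙ+* S)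
  map_zero' := HahnSeries.map_zero (f : ZeroHom R S)
  map_add' _ _ := HahnSeries.map_add (f : R →+ S)

@[simp]
theorem coeff_mapRingHom (f : R →+* S) (x : HahnSeries Γ R) (g : Γ) :
    (mapRingHom f x).coeff g = f (x.coeff g) := rfl

theorem exists_mapRingHom_subtype_eq {T : Type*} [SetLike T R] [SubsemiringClass T R] {s : T}
    {x : HahnSeries Γ R} (hx : ∀ g, x.coeff g ∈ s) :
    ∃ x' : HahnSeries Γ s, mapRingHom (SubsemiringClass.subtype s) x' = x :=
  ⟨⟨fun g => ⟨x.coeff g, hx g⟩, x.isPWO_support.mono fun _ hg h => hg (Subtype.ext h)⟩, rfl⟩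

end Map

section Nilpotent

variable {R : Type*}

theorem coeff_pow_mem_pow [CommSemiring R] {I : Ideal R} {x : HahnSeries Γ R}
    (hx : ∀ g, x.coeff g ∈ I) (n : ℕ) (g : Γ) : (x ^ n).coeff g ∈ I ^ n := by
  induction n generalizing g with
  | zero =>
    rw [pow_zero, pow_zero, Ideal.one_eq_top]
    exact Submodule.mem_top
  | succ n ih =>
    rw [pow_succ, pow_succ, coeff_mul]
    exact sum_mem fun ij _ => Ideal.mul_mem_mul (ih ij.1) (hx ij.2)

theorem isNilpotent_of_forall_isNilpotent_coeff [CommSemiring R]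
    (hR : IsNilpotent (nilradical R)) {x : HahnSeries Γ R} (hx : ∀ g, IsNilpotent (x.coeff g)) :
    IsNilpotent x := by
  obtain ⟨n, hn⟩ := hR
  refine ⟨n, HahnSeries.ext <| funext fun g => ?_⟩
  simpa [hn] using coeff_pow_mem_pow (I := nilradical R) hx n g

theorem isUnit_of_isNilpotent_coeff_sub [CommRing R] (hR : IsNilpotent (nilradical R))
    {x y : HahnSeries Γ R} (hy : IsUnit y) (hxy : ∀ g, IsNilpotent (x.coeff g - y.coeff g)) :
    IsUnit x := by
  have hnil := isNilpotent_of_forall_isNilpotent_coeff hR (x := x - y) (by simpa using hxy)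
  simpa using hnil.isUnit_add_left_of_commute hy (Commute.all _ _)

end Nilpotent

end HahnSeries

namespace LaurentSeries

section Rescale

variable {R A : Type*} [CommSemiring R] [Semiring A] [Algebra R A]

def rescale (a : Rˣ) : LaurentSeries A →+* LaurentSeries A where
  toFun x := ⟨fun k => (a ^ k) • x.coeff k,
    x.isPWO_support.mono fun k hk h => hk (by simp [h])⟩
  map_one' := by
    ext k
    rcases eq_or_ne k 0 with rfl | hk <;> simp [coeff_one, *]
  map_mul' x y := by
    ext k
    have hs : ∀ z : LaurentSeries A, (⟨fun k => (a ^ k) • z.coeff k,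
        z.isPWO_support.mono fun k hk h => hk (by simp [h])⟩ : LaurentSeries A).support =
        z.support :=
      fun z => by ext; simp [smul_eq_zero_iff_eq]
    show (a ^ k) • (x * y).coeff k = _
    rw [coeff_mul, coeff_mul, smul_sum]
    refine sum_congr (by ext; simp only [Finset.mem_antidiagonal, hs]) fun ij hij => ?_
    rw [Finset.mem_antidiagonal] at hij
    rw [smul_mul_smul_comm, ← hij.2.2, zpow_add]
  map_zero' := by ext; simp
  map_add' x y := by ext; simp [smul_add]

@[simp]
theorem coeff_rescale (a : Rˣ) (x : LaurentSeries A) (k : ℤ) :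
    (rescale a x).coeff k = (a ^ k) • x.coeff k := rfl

theorem rescale_eq_self {a : Rˣ} {p : ℕ} (ha : a ^ p = 1) {x : LaurentSeries A}
    (hx : ∀ k : ℤ, ¬ (p : ℤ) ∣ k → x.coeff k = 0) : rescale a x = x := by
  ext k
  by_cases hk : (p : ℤ) ∣ k
  · obtain ⟨q, rfl⟩ := hk
    rw [coeff_rescale, zpow_mul, zpow_natCast, ha, one_zpow, one_smul]
  · rw [coeff_rescale, hx k hk, smul_zero]

end Rescale

theorem coeff_eq_zero_of_isNilpotent_coeff_sub {K A : Type*} [Field K] [CommRing A]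
    [Algebra K A] (hA : IsNilpotent (nilradical A)) {p : ℕ} (hp : 0 < p) {ω : K}
    (hω : IsPrimitiveRoot ω p) (i : ℤ) {B G : LaurentSeries A} (hG : IsUnit G)
    (hBG : ∀ k, IsNilpotent (B.coeff k - G.coeff k))
    (hBp : ∀ k : ℤ, ¬ (p : ℤ) ∣ k → (B ^ p).coeff k = 0)
    (hGs : ∀ k : ℤ, ¬ (p : ℤ) ∣ (k - i) → G.coeff k = 0) :
    ∀ k : ℤ, ¬ (p : ℤ) ∣ (k - i) → B.coeff k = 0 := by
  have : NeZero p := ⟨hp.ne'⟩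
  have hω₀ : ω ≠ 0 := hω.ne_zero hp.ne'
  set u : Kˣ := Units.mk0 ω hω₀
  set C := HahnSeries.C (algebraMap K A (ω ^ (-i))) * rescale u B with hCdef
  have hC : ∀ k, (C - B).coeff k = (ω ^ (k - i) - 1) • B.coeff k := fun k => by
    rw [HahnSeries.coeff_sub, hCdef, C_mul_eq_smul, HahnSeries.coeff_smul, algebraMap_smul,
      coeff_rescale, Units.smul_def, Units.val_zpow_eq_zpow_val, Units.val_mk0, smul_smul,
      ← zpow_add₀ hω₀, neg_add_eq_sub, sub_smul, one_smul]
  have hCp : C ^ p = B ^ p := by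
    have hup : u ^ p = 1 := Units.ext <| by
      rw [Units.val_pow_eq_pow_val, Units.val_mk0, hω.pow_eq_one, Units.val_one]
    rw [hCdef, mul_pow, ← map_pow (rescale u), rescale_eq_self hup hBp, ← map_pow, ← map_pow,
      ← zpow_natCast, ← zpow_mul, (hω.zpow_eq_one_iff_dvd _).2 (dvd_mul_left _ _), map_one,
      map_one, one_mul]
  have hCB : IsNilpotent (C - B) := by
    refine isNilpotent_of_forall_isNilpotent_coeff hA fun k => ?_
    rw [hC]
    by_cases hk : (p : ℤ) ∣ k - i
    · rw [(hω.zpow_eq_one_iff_dvd _).2 hk, sub_self, zero_smul]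
      exact IsNilpotent.zero
    · exact (by simpa [hGs k hk] using hBG k : IsNilpotent (B.coeff k)).smul _
  have hpB : IsUnit ((p : LaurentSeries A) * B ^ (p - 1)) := by
    refine IsUnit.mul ?_ ((isUnit_of_isNilpotent_coeff_sub hA hG hBG).pow _)
    rw [← map_natCast (algebraMap K (LaurentSeries A))]
    exact hω.neZero'.out.isUnit.map _
  have hCB₀ := sub_eq_zero.2 (eq_of_pow_eq_of_isNilpotent_sub hCp hCB hpB)
  intro k hk
  have hk' := congrArg (HahnSeries.coeff · k) hCB₀
  simp only [hC, HahnSeries.coeff_zero, smul_eq_zero, sub_eq_zero] at hk'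
  exact hk'.resolve_left ((hω.zpow_eq_one_iff_dvd _).not.2 hk)

open scoped IsMulCommutative in
theorem coeff_eq_zero_of_isNilpotent_coeff_sub_algebraMap {K M : Type*} [Field K] [Ring M]
    [Algebra K M] [FiniteDimensional K M] {p : ℕ} (hp : 0 < p) {ω : K}
    (hω : IsPrimitiveRoot ω p) (i : ℤ) {B : LaurentSeries M}
    (hcomm : ∀ k l : ℤ, Commute (B.coeff k) (B.coeff l)) {g : LaurentSeries K} (hg : g ≠ 0)
    (hnil : ∀ k : ℤ, IsNilpotent (B.coeff k - algebraMap K M (g.coeff k)))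
    (hBp : ∀ k : ℤ, ¬ (p : ℤ) ∣ k → (B ^ p).coeff k = 0)
    (hgs : ∀ k : ℤ, ¬ (p : ℤ) ∣ (k - i) → g.coeff k = 0) :
    ∀ k : ℤ, ¬ (p : ℤ) ∣ (k - i) → B.coeff k = 0 := by
  set S := Algebra.adjoin K (Set.range B.coeff)
  have : IsMulCommutative S := Algebra.isMulCommutative_adjoin K <| by
    rintro _ ⟨k, rfl⟩ _ ⟨l, rfl⟩
    exact hcomm k l
  have : IsArtinianRing S := IsArtinianRing.of_finite K S
  obtain ⟨B', hB'⟩ :=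
    exists_mapRingHom_subtype_eq (s := S) fun k => Algebra.subset_adjoin ⟨k, rfl⟩
  have hι : Function.Injective (SubsemiringClass.subtype S) := Subtype.val_injective
  set G' := mapRingHom (algebraMap K S) g
  have hB'G' : ∀ k, IsNilpotent (B'.coeff k - G'.coeff k) := fun k => by
    rw [← IsNilpotent.map_iff hι]
    simpa [G', ← hB'] using hnil k
  have hB'p : ∀ k : ℤ, ¬ (p : ℤ) ∣ k → (B' ^ p).coeff k = 0 := fun k hk => hι <| by
    simpa [← coeff_mapRingHom, map_pow, hB'] using hBp k hk
  have hG's : ∀ k : ℤ, ¬ (p : ℤ) ∣ (k - i) → G'.coeff k = 0 := fun k hk => by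
    simp [G', hgs k hk]
  intro k hk
  rw [← hB', coeff_mapRingHom, coeff_eq_zero_of_isNilpotent_coeff_sub
    IsArtinianRing.isNilpotent_nilradical hp hω i ((isUnit_iff_ne_zero.2 hg).map _) hB'G' hB'p
    hG's k hk, map_zero]

end LaurentSeries

theorem stmt_16_general (m p : ℕ) (hp : 0 < p) (i : ℤ)
    (B : LaurentSeries (Matrix (Fin m) (Fin m) ℂ))
    (hcomm : ∀ k l : ℤ, Commute (B.coeff k) (B.coeff l))
    (g : LaurentSeries ℂ) (hg : g ≠ 0)
    (hnil : ∀ k : ℤ, IsNilpotent (B.coeff k - g.coeff k • (1 : Matrix (Fin m) (Fin m) ℂ)))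
    (hBp : ∀ k : ℤ, ¬ (p : ℤ) ∣ k → (B ^ p).coeff k = 0)
    (hgs : ∀ k : ℤ, ¬ (p : ℤ) ∣ (k - i) → g.coeff k = 0) :
    ∀ k : ℤ, ¬ (p : ℤ) ∣ (k - i) → B.coeff k = 0 :=
  LaurentSeries.coeff_eq_zero_of_isNilpotent_coeff_sub_algebraMap hp
    (Complex.isPrimitiveRoot_exp p hp.ne') i hcomm hg
    (fun k => by simpa [Algebra.algebraMap_eq_smul_one] using hnil k) hBp hgs

/-- Let `B ∈ Mₘ(ℂ)((y))` have pairwise commuting coefficients and equal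
a nonzero scalar series `g` plus coefficientwise-nilpotent terms.  If the support of
`B^p` is contained in `pℤ` and the support of `g` is contained in `i + pℤ`, then the
support of `B` is contained in `i + pℤ`. -/
theorem stmt_16 (m p : ℕ) (hm : 0 < m) (hp : 0 < p) (i : ℤ)
    (B : LaurentSeries (Matrix (Fin m) (Fin m) ℂ))
    (hcomm : ∀ k l : ℤ, Commute (B.coeff k) (B.coeff l))
    (g : LaurentSeries ℂ) (hg : g ≠ 0)
    (hnil : ∀ k : ℤ, IsNilpotent (B.coeff k - g.coeff k • (1 : Matrix (Fin m) (Fin m) ℂ)))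
    (hBp : ∀ k : ℤ, ¬ (p : ℤ) ∣ k → (B ^ p).coeff k = 0)
    (hgs : ∀ k : ℤ, ¬ (p : ℤ) ∣ (k - i) → g.coeff k = 0) :
    ∀ k : ℤ, ¬ (p : ℤ) ∣ (k - i) → B.coeff k = 0 :=
  stmt_16_general m p hp i B hcomm g hg hnil hBp hgs
end
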